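/- arXiv:2305.14031 — 5 statements merged into one kernel-verified Lean document; each statement's English description precedes it below -/
import Mathlib

section
/- Let N ≥ 1 and a be integers with 1 ≤ a ≤ N, and let n, l be nonnegative integers with l ≤ n. Then ∑_{k=l+1}^{n} 2(k + a/N) / ((n−k)! · (2a/N)_{n+k+1}) = (n−l) / ((n−l)! · (2a/N)_{n+l+1}). -/
open Finset

/-- The Pochhammer symbol (rising factorial) `(x)_n = x(x+1)⋯(x+n−1)`. -/
noncomputable def poch (x : ℝ) (n : ℕ) : ℝ := (ascPochhammer ℝ n).eval x

/-!
With `x = 2a/N`, the summand at `k = l + 1` is the difference of the right-hand side at `l` and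
at `l + 1`: since `(x)_{n+l+2} = (x)_{n+l+1} (x + n + l + 1)` and
`(2(l + 1) + x) + (n − l − 1) = x + n + l + 1`, both sides reduce to `1 / ((n−l−1)! (x)_{n+l+1})`.
The sum therefore telescopes, and the right-hand side vanishes at `l = n`.
-/

open Nat

lemma poch_succ (x : ℝ) (m : ℕ) : poch x (m + 1) = poch x m * (x + m) :=
  ascPochhammer_succ_eval m x

lemma poch_ne_zero {x : ℝ} (hx : ∀ m : ℕ, x + m ≠ 0) (m : ℕ) : poch x m ≠ 0 := by
  simp only [poch, ne_eq, ascPochhammer_eval_eq_zero_iff, not_exists, not_and]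
  intro k _ hk
  exact hx k (by rw [hk]; ring)

lemma div_factorial_poch_sub_succ {x : ℝ} (hx : ∀ m : ℕ, x + m ≠ 0) {n i : ℕ} (hi : i < n) :
    ((n : ℝ) - i) / ((n - i)! * poch x (n + i + 1))
        - ((n : ℝ) - (i + 1 : ℕ)) / ((n - (i + 1))! * poch x (n + (i + 1) + 1))
      = (2 * ((i + 1 : ℕ) : ℝ) + x) / ((n - (i + 1))! * poch x (n + (i + 1) + 1)) := by
  obtain ⟨j, rfl⟩ := Nat.exists_eq_add_of_lt hi
  have hsub : i + j + 1 - i = j + 1 := by omega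
  have hsub' : i + j + 1 - (i + 1) = j := by omega
  rw [hsub, hsub', show i + j + 1 + (i + 1) + 1 = (i + j + 1 + i + 1) + 1 by ring,
    poch_succ x (i + j + 1 + i + 1), factorial_succ]
  have hP := poch_ne_zero hx (i + j + 1 + i + 1)
  have hlast := hx (i + j + 1 + i + 1)
  push_cast at hlast ⊢
  field_simp
  ring

theorem sum_Icc_div_factorial_poch {x : ℝ} (hx : ∀ m : ℕ, x + m ≠ 0) {n l : ℕ} (hln : l ≤ n) :
    ∑ k ∈ Icc (l + 1) n, (2 * (k : ℝ) + x) / ((n - k)! * poch x (n + k + 1))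
      = ((n : ℝ) - l) / ((n - l)! * poch x (n + l + 1)) := by
  set g : ℕ → ℝ := fun i ↦ ((n : ℝ) - i) / ((n - i)! * poch x (n + i + 1))
  calc ∑ k ∈ Icc (l + 1) n, (2 * (k : ℝ) + x) / ((n - k)! * poch x (n + k + 1))
      = ∑ i ∈ Ico l n, (g i - g (i + 1)) := by
        rw [← Ico_add_one_right_eq_Icc, ← sum_Ico_add']
        exact sum_congr rfl fun i hi ↦ (div_factorial_poch_sub_succ hx (mem_Ico.1 hi).2).symm
    _ = -∑ i ∈ Ico l n, (g (i + 1) - g i) := by simp only [← sum_neg_distrib, neg_sub]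
    _ = g l - g n := by rw [sum_Ico_sub (f := g) hln]; ring
    _ = g l := by simp [g]

/-- Lemma 2.1, formula (2.1): for `1 ≤ a ≤ N` and `l ≤ n`,
`∑_{k=l+1}^{n} 2(k + a/N) / ((n−k)!·(2a/N)_{n+k+1}) = (n−l)/((n−l)!·(2a/N)_{n+l+1})`. -/
theorem sum_two_mul_add_div_factorial_poch
    (N a : ℕ) (h1 : 1 ≤ a) (h2 : a ≤ N) (n l : ℕ) (hln : l ≤ n) :
    ∑ k ∈ Finset.Icc (l + 1) n,
        2 * ((k : ℝ) + (a : ℝ) / N) /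
          ((n - k).factorial * poch (2 * (a : ℝ) / N) (n + k + 1))
      = ((n : ℝ) - l) /
          ((n - l).factorial * poch (2 * (a : ℝ) / N) (n + l + 1)) := by
  have hx : 0 < 2 * (a : ℝ) / N := by
    have : (0 : ℝ) < a := by exact_mod_cast h1
    have : (0 : ℝ) < N := by exact_mod_cast h1.trans h2
    positivity
  rw [← sum_Icc_div_factorial_poch (fun m ↦ by positivity) hln]
  refine sum_congr rfl fun k _ ↦ ?_
  ring
end

section
/- Let N ≥ 1 and a be integers with 1 ≤ a ≤ N, and let n be a nonnegative integer. For every complex number z with |z| < 1, ∏_{k=0}^{n} (Nk+a)² / ((Nk+a)² − z²) = ∑_{k=0}^{n} [N · ((a/N)_{n+1})² / ((n−k)! · (2a/N)_{n+k+1})] · [(2a/N)_k / (k! · (Nk+a))] · 2(−1)^k (Nk+a)² / ((Nk+a)² − z²). -/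
/-!
The nodes `v j = (N j + a)²` are distinct, so evaluating the Lagrange interpolant of the constant
`1` at `z²` gives the partial-fraction expansion of `∏ (v j - z²)⁻¹`. The weight
`∏ v / ∏_{j ≠ k} (v j - v k)` is computed by factoring `v j - v k = N (j - k) · (N (j + k) + 2a)`:
the first factors give `(-1)ᵏ k! (n - k)!` and the second ones a shifted Pochhammer symbol.
-/

open Finset

open scoped Nat

namespace Lagrange

variable {F ι : Type*} [Field F] [DecidableEq ι] {s : Finset ι} {v : ι → F} {x : F}

theorem inv_prod_sub_eq_sum (hvs : Set.InjOn v s) (hs : s.Nonempty) (hx : ∀ i ∈ s, v i ≠ x) :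
    (∏ i ∈ s, (v i - x))⁻¹ = ∑ i ∈ s, (∏ j ∈ s.erase i, (v j - v i))⁻¹ * (v i - x)⁻¹ := by
  have hvs' : Set.InjOn (-v) s := fun i hi j hj h ↦ hvs hi hj (neg_injective h)
  have h := eval_interpolate_not_at_node (v := -v) (x := -x) 1
    fun i hi ↦ neg_injective.ne (hx i hi).symm
  simp only [interpolate_one hvs' hs, Polynomial.eval_one, eval_nodal, Pi.one_apply, mul_one,
    nodalWeight, Pi.neg_apply, neg_sub_neg, prod_inv_distrib] at h
  exact (eq_inv_of_mul_eq_one_right h.symm).symm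

end Lagrange

theorem poch_eq_prod (x : ℝ) (n : ℕ) : poch x n = ∏ j ∈ range n, (x + j) := by
  induction n with
  | zero => simp [poch]
  | succ n ih => rw [poch, ascPochhammer_succ_eval, ← poch, ih, prod_range_succ]

theorem poch_add (x : ℝ) (m n : ℕ) : poch x (m + n) = poch x m * poch (x + m) n := by
  rw [poch, ← ascPochhammer_mul, Polynomial.eval_mul, Polynomial.eval_comp]
  simp [poch]

theorem prod_range_mul_add {N : ℝ} (hN : N ≠ 0) (a : ℝ) (m : ℕ) :
    ∏ j ∈ range m, (N * j + a) = N ^ m * poch (a / N) m := by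
  rw [poch_eq_prod, ← card_range m, ← prod_const, card_range, ← prod_mul_distrib]
  refine prod_congr rfl fun j _ ↦ ?_
  field_simp
  ring

theorem prod_erase_range_natCast_sub {k n : ℕ} (hk : k ≤ n) :
    ∏ j ∈ (range (n + 1)).erase k, ((j : ℝ) - k) = (-1) ^ k * k ! * (n - k)! := by
  have hsplit : (range (n + 1)).erase k = range k ∪ Ico (k + 1) (n + 1) := by
    ext j
    simp only [mem_erase, mem_range, mem_union, mem_Ico]
    omega
  have hdisj : Disjoint (range k) (Ico (k + 1) (n + 1)) := by
    simp only [disjoint_left, mem_range, mem_Ico]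
    omega
  have hbelow : ∏ j ∈ range k, ((j : ℝ) - k) = (-1) ^ k * k ! := by
    simp_rw [← neg_sub (k : ℝ), prod_neg, card_range, ← descPochhammer_eval_eq_prod_range,
      descPochhammer_eval_eq_descFactorial, Nat.descFactorial_self]
  have habove : ∏ j ∈ Ico (k + 1) (n + 1), ((j : ℝ) - k) = (n - k)! := by
    rw [prod_Ico_eq_prod_range, show n + 1 - (k + 1) = n - k by omega,
      ← prod_range_add_one_eq_factorial, Nat.cast_prod]
    refine prod_congr rfl fun j _ ↦ ?_
    push_cast
    ring
  rw [hsplit, prod_union hdisj, hbelow, habove]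

theorem prod_sq_div_prod_erase_sq_sub {N a : ℝ} (hN : 0 < N) (ha : 0 < a) {k n : ℕ} (hk : k ≤ n) :
    (∏ j ∈ range (n + 1), (N * j + a) ^ 2) /
        ∏ j ∈ (range (n + 1)).erase k, ((N * j + a) ^ 2 - (N * k + a) ^ 2)
      = N * poch (a / N) (n + 1) ^ 2 / ((n - k)! * poch (2 * a / N) (n + k + 1)) *
          (poch (2 * a / N) k / (k ! * (N * k + a))) * (2 * (-1) ^ k * (N * k + a) ^ 2) := by
  have hk' : k ∈ range (n + 1) := mem_range.mpr (by omega)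
  have hnum : ∏ j ∈ range (n + 1), (N * j + a) ^ 2 = (N ^ (n + 1) * poch (a / N) (n + 1)) ^ 2 := by
    rw [prod_pow, prod_range_mul_add hN.ne']
  have hden : ∏ j ∈ (range (n + 1)).erase k, ((N * j + a) ^ 2 - (N * k + a) ^ 2)
      = N ^ n * ((-1) ^ k * k ! * (n - k)!) *
          (N ^ (n + 1) * poch (2 * a / N + k) (n + 1) / (2 * (N * k + a))) := by
    have hfactor : ∀ j : ℕ, (N * j + a) ^ 2 - (N * k + a) ^ 2
        = N * ((j : ℝ) - k) * (N * j + (N * k + 2 * a)) := fun j ↦ by ring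
    have hshift : (N * k + 2 * a) / N = 2 * a / N + k := by field_simp; ring
    have hsum : ∏ j ∈ (range (n + 1)).erase k, (N * j + (N * k + 2 * a))
        = N ^ (n + 1) * poch (2 * a / N + k) (n + 1) / (2 * (N * k + a)) := by
      rw [eq_div_iff (by positivity), ← hshift, ← prod_range_mul_add hN.ne', ← prod_erase_mul _ _ hk']
      ring
    rw [prod_congr rfl fun j _ ↦ hfactor j, prod_mul_distrib, prod_mul_distrib, prod_const,
      card_erase_of_mem hk', card_range, Nat.add_sub_cancel, prod_erase_range_natCast_sub hk, hsum]
  have hpoch : poch (2 * a / N) (n + k + 1) = poch (2 * a / N) k * poch (2 * a / N + k) (n + 1) := by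
    rw [← poch_add]; ring_nf
  have hsign : ((-1 : ℝ) ^ k) ^ 2 = 1 := by rw [← pow_mul, pow_mul', neg_one_sq, one_pow]
  have hR : 0 < poch (2 * a / N) k := ascPochhammer_pos _ _ (by positivity)
  have hS : 0 < poch (2 * a / N + k) (n + 1) := ascPochhammer_pos _ _ (by positivity)
  rw [hnum, hden, hpoch]
  generalize poch (2 * a / N) k = R at hR ⊢
  generalize poch (2 * a / N + k) (n + 1) = S at hS ⊢
  generalize poch (a / N) (n + 1) = Q
  field_simp
  linear_combination -(N ^ (n + 1) * Q ^ 2) * hsign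

/-- The partial-fraction expansion used in the proof of Theorem 2.3 (case `d = 0`):
for `1 ≤ a ≤ N`, `n ≥ 0` and `|z| < 1`,
`∏_{k=0}^{n} (Nk+a)²/((Nk+a)²−z²)
  = ∑_{k=0}^{n} [N·((a/N)_{n+1})²/((n−k)!·(2a/N)_{n+k+1})]·[(2a/N)_k/(k!·(Nk+a))]
      · 2(−1)^k (Nk+a)²/((Nk+a)²−z²)`. -/
theorem prod_sq_div_sq_sub_eq_sum
    (N a : ℕ) (h1 : 1 ≤ a) (h2 : a ≤ N) (n : ℕ) (z : ℂ) (hz : ‖z‖ < 1) :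
    ∏ k ∈ Finset.range (n + 1),
        ((N : ℂ) * k + a) ^ 2 / (((N : ℂ) * k + a) ^ 2 - z ^ 2)
      = ∑ k ∈ Finset.range (n + 1),
          (((N : ℝ) * poch ((a : ℝ) / N) (n + 1) ^ 2 /
              ((n - k).factorial * poch (2 * (a : ℝ) / N) (n + k + 1)) : ℝ) : ℂ) *
            ((poch (2 * (a : ℝ) / N) k / (k.factorial * ((N : ℝ) * k + a)) : ℝ) : ℂ) *
            (2 * (-1 : ℂ) ^ k * ((N : ℂ) * k + a) ^ 2 /
              (((N : ℂ) * k + a) ^ 2 - z ^ 2)) := by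
  have hN : 0 < N := h1.trans h2
  have hcast : ∀ j : ℕ, ((N : ℂ) * j + a) ^ 2 = (((N * j + a) ^ 2 : ℕ) : ℂ) := fun j ↦ by
    push_cast; ring
  have hinj : Set.InjOn (fun j : ℕ ↦ ((N : ℂ) * j + a) ^ 2) (range (n + 1)) := by
    intro i _ j _ hij
    simp only [hcast, Nat.cast_inj] at hij
    have := Nat.pow_left_injective two_ne_zero hij
    exact Nat.eq_of_mul_eq_mul_left hN (by omega)
  have hne : ∀ j ∈ range (n + 1), ((N : ℂ) * j + a) ^ 2 ≠ z ^ 2 := by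
    intro j _ hj
    have : (1 : ℝ) ≤ ‖((N : ℂ) * j + a) ^ 2‖ := by
      rw [hcast, Complex.norm_natCast]
      exact_mod_cast Nat.one_le_iff_ne_zero.mpr (by positivity)
    rw [hj, norm_pow] at this
    nlinarith [norm_nonneg z]
  rw [prod_div_distrib, div_eq_mul_inv, Lagrange.inv_prod_sub_eq_sum hinj nonempty_range_add_one hne,
    mul_sum]
  refine sum_congr rfl fun k hk ↦ ?_
  have hcoeff := congrArg Complex.ofReal <| prod_sq_div_prod_erase_sq_sub
    (N := N) (a := a) (by positivity) (by positivity) (Nat.lt_succ_iff.mp (mem_range.mp hk))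
  push_cast at hcoeff ⊢
  linear_combination (((N : ℂ) * k + a) ^ 2 - z ^ 2)⁻¹ * hcoeff
end

section
/- Let N ≥ 1 and a be integers with 1 ≤ a ≤ N, let n ≥ m ≥ 0 be integers, and let z be a complex number with |z| < 1. Then ∏_{k=m}^{n} (1 − z²/(Nk+a)²)^{−1} = ∑_{l=0}^{∞} ⁿₘt*_{N,a}({2}^l) · z^{2l}, where ⁿₘt*_{N,a}({2}^l) = ∑_{n ≥ k_1 ≥ ⋯ ≥ k_l ≥ m} 1/((Nk_1+a)² ⋯ (Nk_l+a)²) for l ≥ 1 and ⁿₘt*_{N,a}({2}^0) = 1; in particular the power series on the right converges absolutely for |z| < 1. -/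
open Finset

/-
Write `w k = 1 / (N k + a)²`. An admissible tuple `n ≥ k₁ ≥ ⋯ ≥ k_{l+1} ≥ m` either ends in `m`
or lies in `[m + 1, n]`, so `t_m(l + 1) = w m · t_m(l) + t_{m+1}(l + 1)`: the coefficients
`t_m(l)` are the Cauchy product of the geometric sequence `(w m)ˡ` with the coefficients
`t_{m+1}(l)`. Since `(1 - w m z²)⁻¹ = ∑ (w m z²)ˡ`, a descending induction on `m`, starting from
the empty range where both sides are `1`, multiplies in one geometric series at a time.
-/

/-- `ⁿₘt*_{N,a}({2}^l) = ∑_{n ≥ k₁ ≥ ⋯ ≥ k_l ≥ m} 1/((Nk₁+a)²⋯(Nk_l+a)²)`, with value `1`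
for `l = 0`. -/
noncomputable def tStarFinBetween (N a n m l : ℕ) : ℝ :=
  ∑ k : Fin l → Fin (n + 1),
    if (∀ i, m ≤ (k i : ℕ)) ∧ (∀ i j : Fin l, i ≤ j → (k j : ℕ) ≤ (k i : ℕ)) then
      ∏ i : Fin l, (1 : ℝ) / ((N : ℝ) * (k i : ℕ) + a) ^ 2
    else 0

lemma Fin.antitone_snoc_iff {α : Type*} [Preorder α] {l : ℕ} {q : Fin l → α} {x : α} :
    Antitone (Fin.snoc q x : Fin (l + 1) → α) ↔ Antitone q ∧ ∀ i, x ≤ q i := by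
  refine ⟨fun h => ⟨fun i j hij => ?_, fun i => ?_⟩, fun ⟨hq, hx⟩ i j hij => ?_⟩
  · simpa using h (Fin.castSucc_le_castSucc_iff.mpr hij)
  · simpa using h ((Fin.castSucc_lt_last i).le)
  · induction j using Fin.lastCases with
    | last =>
      induction i using Fin.lastCases with
      | last => rfl
      | cast i => simpa using hx i
    | cast j =>
      induction i using Fin.lastCases with
      | last => exact absurd hij (not_le.mpr (Fin.castSucc_lt_last j))
      | cast i => simpa using hq (Fin.castSucc_le_castSucc_iff.mp hij)

lemma Fintype.sum_fin_succ_pi_eq_sum_snoc {β M : Type*} [Fintype β] [AddCommMonoid M] {l : ℕ}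
    (f : (Fin (l + 1) → β) → M) : ∑ k, f k = ∑ x, ∑ q : Fin l → β, f (Fin.snoc q x) := by
  rw [← Fintype.sum_prod_type']
  exact (Fintype.sum_equiv (Fin.snocEquiv fun _ => β) _ _ fun _ => rfl).symm

lemma tStarFinBetween_zero (N a n m : ℕ) : tStarFinBetween N a n m 0 = 1 := by
  simp [tStarFinBetween]

lemma tStarFinBetween_succ_of_lt (N a : ℕ) {n m : ℕ} (h : n < m) (l : ℕ) :
    tStarFinBetween N a n m (l + 1) = 0 :=
  Finset.sum_eq_zero fun k _ => if_neg fun hk => by have := (hk.1 0).trans (k 0).is_le; omega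

lemma tStarFinBetween_succ (N a : ℕ) {n m : ℕ} (hm : m ≤ n) (l : ℕ) :
    tStarFinBetween N a n m (l + 1) =
      1 / ((N : ℝ) * m + a) ^ 2 * tStarFinBetween N a n m l +
        tStarFinBetween N a n (m + 1) (l + 1) := by
  set w : ℕ → ℝ := fun k => 1 / ((N : ℝ) * k + a) ^ 2
  set m₀ : Fin (n + 1) := ⟨m, by omega⟩
  have h_def : ∀ m l, tStarFinBetween N a n m l = ∑ k : Fin l → Fin (n + 1),
      if (∀ i, m ≤ (k i : ℕ)) ∧ Antitone k then ∏ i, w (k i) else 0 := fun _ _ => rfl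
  have h_split : ∀ k : Fin (l + 1) → Fin (n + 1),
      (if (∀ i, m ≤ (k i : ℕ)) ∧ Antitone k then ∏ i, w (k i) else 0) =
        (if k (Fin.last l) = m₀ ∧ Antitone k then ∏ i, w (k i) else 0) +
        (if (∀ i, m + 1 ≤ (k i : ℕ)) ∧ Antitone k then ∏ i, w (k i) else 0) := by
    intro k
    by_cases hk : Antitone k
    · have h_last : ∀ i, (k (Fin.last l) : ℕ) ≤ k i := fun i => hk (Fin.le_last i)
      simp only [hk, and_true, m₀, Fin.ext_iff]
      split_ifs <;> grind
    · simp [hk]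
  have h_ends_in_m : (∑ k : Fin (l + 1) → Fin (n + 1),
      if k (Fin.last l) = m₀ ∧ Antitone k then ∏ i, w (k i) else 0) =
        w m * ∑ q : Fin l → Fin (n + 1),
          if (∀ i, m ≤ (q i : ℕ)) ∧ Antitone q then ∏ i, w (q i) else 0 := by
    rw [Fintype.sum_fin_succ_pi_eq_sum_snoc, Finset.sum_eq_single m₀, mul_sum]
    · refine sum_congr rfl fun q _ => ?_
      simp only [Fin.snoc_last, true_and, Fin.antitone_snoc_iff, Fin.prod_univ_castSucc,
        Fin.snoc_castSucc, mul_ite, mul_zero]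
      exact if_congr and_comm (mul_comm _ _) rfl
    · intro x _ hx
      simp [hx]
    · simp
  rw [h_def, h_def, h_def, sum_congr rfl fun k _ => h_split k, sum_add_distrib, h_ends_in_m]

lemma tStarFinBetween_eq_sum_antidiagonal (N a : ℕ) {n m : ℕ} (hm : m ≤ n) (l : ℕ) :
    tStarFinBetween N a n m l = ∑ p ∈ antidiagonal l,
      (1 / ((N : ℝ) * m + a) ^ 2) ^ p.1 * tStarFinBetween N a n (m + 1) p.2 := by
  induction l with
  | zero => simp [tStarFinBetween_zero]
  | succ l ih =>
    rw [Nat.sum_antidiagonal_succ, tStarFinBetween_succ N a hm, ih, mul_sum, add_comm]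
    simp only [pow_zero, one_mul, pow_succ', mul_assoc]

lemma summable_norm_and_tsum_antidiagonal_geometric_mul {K : Type*} [NormedDivisionRing K]
    [CompleteSpace K] {w : K} (hw : ‖w‖ < 1) {f : ℕ → K} (hf : Summable (‖f ·‖)) :
    Summable (fun l => ‖∑ p ∈ antidiagonal l, w ^ p.1 * f p.2‖) ∧
      ∑' l, ∑ p ∈ antidiagonal l, w ^ p.1 * f p.2 = (1 - w)⁻¹ * ∑' l, f l := by
  have h_geom := summable_norm_geometric_of_norm_lt_one hw
  refine ⟨summable_norm_sum_mul_antidiagonal_of_summable_norm h_geom hf, ?_⟩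
  rw [← tsum_mul_tsum_eq_tsum_sum_antidiagonal_of_summable_norm h_geom hf,
    tsum_geometric_of_norm_lt_one hw]

lemma norm_div_natCast_le {K : Type*} [RCLike K] (x : K) (c : ℕ) : ‖x / c‖ ≤ ‖x‖ := by
  rcases c.eq_zero_or_pos with rfl | hc
  · simp
  · rw [norm_div, RCLike.norm_natCast]
    exact div_le_self (norm_nonneg x) (by exact_mod_cast hc)

lemma tStarFinBetween_mul_pow_eq_sum_antidiagonal (N a : ℕ) {n m : ℕ} (hm : m ≤ n) (x : ℂ)
    (l : ℕ) : (tStarFinBetween N a n m l : ℂ) * x ^ l = ∑ p ∈ antidiagonal l,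
      (x / ((N : ℂ) * m + a) ^ 2) ^ p.1 * ((tStarFinBetween N a n (m + 1) p.2 : ℂ) * x ^ p.2) := by
  rw [tStarFinBetween_eq_sum_antidiagonal N a hm, Complex.ofReal_sum, sum_mul]
  refine sum_congr rfl fun p hp => ?_
  rw [← mem_antidiagonal.mp hp]
  push_cast
  ring

lemma summable_norm_and_prod_eq_tsum_tStarFinBetween_of_lt (N a : ℕ) {n m : ℕ} (h : n < m)
    (x : ℂ) : Summable (fun l => ‖(tStarFinBetween N a n m l : ℂ) * x ^ l‖) ∧
      ∏ k ∈ Icc m n, (1 - x / ((N : ℂ) * k + a) ^ 2)⁻¹ =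
        ∑' l, (tStarFinBetween N a n m l : ℂ) * x ^ l := by
  have h_single : ∀ l, (tStarFinBetween N a n m l : ℂ) * x ^ l = (Pi.single 0 1 : ℕ → ℂ) l := by
    rintro (_ | l)
    · simp [tStarFinBetween_zero]
    · simp [tStarFinBetween_succ_of_lt N a h]
  simp_rw [h_single]
  rw [Icc_eq_empty (by omega), prod_empty, tsum_pi_single]
  exact ⟨summable_of_ne_finset_zero (s := {0}) (by simp +contextual), rfl⟩

theorem summable_norm_and_prod_eq_tsum_tStarFinBetween (N a n : ℕ) {x : ℂ} (hx : ‖x‖ < 1)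
    (m : ℕ) : Summable (fun l => ‖(tStarFinBetween N a n m l : ℂ) * x ^ l‖) ∧
      ∏ k ∈ Icc m n, (1 - x / ((N : ℂ) * k + a) ^ 2)⁻¹ =
        ∑' l, (tStarFinBetween N a n m l : ℂ) * x ^ l := by
  induction hd : n + 1 - m generalizing m with
  | zero => exact summable_norm_and_prod_eq_tsum_tStarFinBetween_of_lt N a (by omega) x
  | succ d ih =>
    obtain h | hm := lt_or_ge n m
    · exact summable_norm_and_prod_eq_tsum_tStarFinBetween_of_lt N a h x
    obtain ⟨h_summable, h_prod⟩ := ih (m + 1) (by omega)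
    have hw : ‖x / ((N : ℂ) * m + a) ^ 2‖ < 1 := by
      have h_cast : ((N : ℂ) * m + a) ^ 2 = ((N * m + a) ^ 2 : ℕ) := by push_cast; rfl
      rw [h_cast]
      exact (norm_div_natCast_le x _).trans_lt hx
    obtain ⟨h_summable', h_tsum⟩ :=
      summable_norm_and_tsum_antidiagonal_geometric_mul hw h_summable
    simp_rw [tStarFinBetween_mul_pow_eq_sum_antidiagonal N a hm]
    refine ⟨h_summable', ?_⟩
    rw [h_tsum, ← h_prod, ← insert_Icc_add_one_left_eq_Icc hm, prod_insert (by simp)]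

theorem prod_eq_sum_tStarFinBetween_general
    (N a : ℕ) (n m : ℕ)
    (z : ℂ) (hz : ‖z‖ < 1) :
    Summable (fun l : ℕ =>
      ‖((tStarFinBetween N a n m l : ℝ) : ℂ) * z ^ (2 * l)‖) ∧
    ∏ k ∈ Finset.Icc m n, (1 - z ^ 2 / ((N : ℂ) * k + a) ^ 2)⁻¹
      = ∑' l : ℕ, ((tStarFinBetween N a n m l : ℝ) : ℂ) * z ^ (2 * l) := by
  have hz2 : ‖z ^ 2‖ < 1 := by
    rw [norm_pow]
    exact pow_lt_one₀ (norm_nonneg z) hz two_ne_zero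
  simp_rw [pow_mul]
  exact summable_norm_and_prod_eq_tsum_tStarFinBetween N a n hz2 m

/-- Formula (3.1): for `1 ≤ a ≤ N`, `m ≤ n` and `|z| < 1`,
`∏_{k=m}^{n} (1 − z²/(Nk+a)²)⁻¹ = ∑_{l=0}^{∞} ⁿₘt*_{N,a}({2}^l) z^{2l}`,
the power series on the right converging absolutely. -/
theorem prod_eq_sum_tStarFinBetween
    (N a : ℕ) (h1 : 1 ≤ a) (h2 : a ≤ N) (n m : ℕ) (hmn : m ≤ n)
    (z : ℂ) (hz : ‖z‖ < 1) :
    Summable (fun l : ℕ =>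
      ‖((tStarFinBetween N a n m l : ℝ) : ℂ) * z ^ (2 * l)‖) ∧
    ∏ k ∈ Finset.Icc m n, (1 - z ^ 2 / ((N : ℂ) * k + a) ^ 2)⁻¹
      = ∑' l : ℕ, ((tStarFinBetween N a n m l : ℝ) : ℂ) * z ^ (2 * l) :=
  prod_eq_sum_tStarFinBetween_general N a n m z hz
end

section
/- Let N ≥ 1 and a be integers with 1 ≤ a ≤ N, and let n be a nonnegative integer and l ≥ 1 an integer. Then ∑_{k_1 ≥ ⋯ ≥ k_l ≥ n+1} 1/((Nk_1+a)² ⋯ (Nk_l+a)²) < (1/(N(Nn+a)))^l, where the sum on the left converges. -/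
/-!
Comparing with a telescoping series: for `x = N(k-1) + a > 0`,
`1/(Nk+a)² < 1/(x(x+N)) = 1/(Nx) - 1/(N(x+N))`, so the one-variable tail
`∑_{k ≥ n+1} 1/(Nk+a)²` is strictly less than `1/(N(Nn+a))`. Dropping the ordering
`k₁ ≥ ⋯ ≥ k_l` only enlarges the multiple sum, which then factors as the `l`-th power of
the one-variable tail.
-/

open Finset Filter Topology

section FinProduct

variable {β : Type*} {f : β → ℝ}

theorem hasSum_prod_fin_of_nonneg (hf : Summable f) (hf0 : ∀ b, 0 ≤ f b) (l : ℕ) :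
    HasSum (fun k : Fin l → β => ∏ i, f (k i)) ((∑' b, f b) ^ l) := by
  induction l with
  | zero => convert hasSum_unique (fun k : Fin 0 → β => ∏ i, f (k i)); simp
  | succ l ih =>
    have hs : Summable fun q : β × (Fin l → β) => f q.1 * ∏ i, f (q.2 i) :=
      hf.mul_of_nonneg (g := fun k : Fin l → β => ∏ i, f (k i)) ih.summable hf0
        fun k => prod_nonneg fun i _ => hf0 (k i)
    have h := hf.hasSum.mul ih hs
    rw [← pow_succ'] at h
    rw [← (Fin.consEquiv fun _ => β).hasSum_iff]
    convert h using 2 with q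
    · rfl
    · simp [Fin.prod_univ_succ]

theorem summable_and_tsum_lt_pow_of_le_prod {l : ℕ} {g : (Fin l → β) → ℝ} {c : ℝ}
    (hf : Summable f) (hf0 : ∀ b, 0 ≤ f b) (hfc : ∑' b, f b < c) (hl : l ≠ 0)
    (hg0 : ∀ k, 0 ≤ g k) (hgf : ∀ k, g k ≤ ∏ i, f (k i)) :
    Summable g ∧ ∑' k, g k < c ^ l := by
  have hprod := hasSum_prod_fin_of_nonneg hf hf0 l
  have hg : Summable g := hprod.summable.of_nonneg_of_le hg0 hgf
  refine ⟨hg, ?_⟩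
  calc ∑' k, g k ≤ (∑' b, f b) ^ l := hprod.tsum_eq ▸ hg.tsum_le_tsum hgf hprod.summable
    _ < c ^ l := pow_lt_pow_left₀ hfc (tsum_nonneg hf0) hl

end FinProduct

section Shift

variable {G : Type*} [AddCommGroup G] [TopologicalSpace G] [IsTopologicalAddGroup G]

theorem summable_ite_le_iff {f : ℕ → G} (m : ℕ) :
    (Summable fun k => if m ≤ k then f k else 0) ↔ Summable fun j => f (j + m) := by
  rw [← summable_nat_add_iff m]
  simp

theorem tsum_ite_le_eq [T2Space G] {f : ℕ → G} (m : ℕ) :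
    ∑' k, (if m ≤ k then f k else 0) = ∑' j, f (j + m) := by
  by_cases hf : Summable fun j => f (j + m)
  · rw [← ((summable_ite_le_iff m).2 hf).sum_add_tsum_nat_add m,
      sum_eq_zero fun k hk => if_neg (by simpa using hk), zero_add]
    simp
  · rw [tsum_eq_zero_of_not_summable hf,
      tsum_eq_zero_of_not_summable (mt (summable_ite_le_iff m).1 hf)]

end Shift

theorem tendsto_one_div_mul_mul_add_atTop {c N : ℝ} (hc : 0 < c) (hN : 0 < N) (b : ℝ) :
    Tendsto (fun k : ℕ => 1 / (c * (N * k + b))) atTop (𝓝 0) := by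
  simp_rw [one_div]
  refine Tendsto.inv_tendsto_atTop (Tendsto.const_mul_atTop hc ?_)
  exact tendsto_atTop_add_const_right _ b (tendsto_natCast_atTop_atTop.const_mul_atTop hN)

theorem one_div_add_sq_lt_sub {x d : ℝ} (hx : 0 < x) (hd : 0 < d) :
    1 / (x + d) ^ 2 < 1 / (d * x) - 1 / (d * (x + d)) := by
  have hsub : 1 / (d * x) - 1 / (d * (x + d)) = 1 / (x * (x + d)) := by
    field_simp
    ring
  rw [hsub, sq]
  exact one_div_lt_one_div_of_lt (by positivity) (by gcongr; linarith)

theorem hasSum_sub_succ_of_antitone {v : ℕ → ℝ} (hv : Antitone v)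
    (hv0 : Tendsto v atTop (𝓝 0)) : HasSum (fun k => v k - v (k + 1)) (v 0) := by
  rw [hasSum_iff_tendsto_nat_of_nonneg (fun k => sub_nonneg.2 (hv k.le_succ))]
  simp_rw [sum_range_sub']
  simpa using hv0.const_sub (v 0)

theorem summable_and_tsum_lt_of_lt_sub_succ {f v : ℕ → ℝ} (hf0 : ∀ k, 0 ≤ f k)
    (hv0 : Tendsto v atTop (𝓝 0)) (hfv : ∀ k, f k < v k - v (k + 1)) :
    Summable f ∧ ∑' k, f k < v 0 := by
  have hv : Antitone v := antitone_nat_of_succ_le fun k => by linarith [hf0 k, hfv k]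
  have htel := hasSum_sub_succ_of_antitone hv hv0
  refine ⟨htel.summable.of_nonneg_of_le hf0 fun k => (hfv k).le, ?_⟩
  rw [← htel.tsum_eq]
  exact Summable.tsum_lt_tsum_of_nonneg (i := 0) hf0 (fun k => (hfv k).le) (hfv 0) htel.summable

theorem summable_and_tsum_tail_one_div_sq_lt {N a : ℝ} (hN : 0 < N) (ha : 0 < a) (n : ℕ) :
    (Summable fun k : ℕ => if n + 1 ≤ k then 1 / (N * k + a) ^ 2 else 0) ∧
    (∑' k : ℕ, if n + 1 ≤ k then 1 / (N * k + a) ^ 2 else 0) < 1 / (N * (N * n + a)) := by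
  obtain ⟨hs, hlt⟩ := summable_and_tsum_lt_of_lt_sub_succ
    (f := fun j : ℕ => 1 / (N * ((j + (n + 1) : ℕ) : ℝ) + a) ^ 2) (fun j => by positivity)
    (tendsto_one_div_mul_mul_add_atTop hN hN (N * n + a)) fun j => by
      convert one_div_add_sq_lt_sub (x := N * j + (N * n + a)) (by positivity) hN using 3 <;>
        push_cast <;> ring
  rw [summable_ite_le_iff, tsum_ite_le_eq]
  exact ⟨hs, by simpa using hlt⟩

/-- The tail estimate for `_{∞,n+1}t*_{N,a}({2}^l)`: for `1 ≤ a ≤ N` and `l ≥ 1`,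
the sum `∑_{k₁ ≥ ⋯ ≥ k_l ≥ n+1} 1/((Nk₁+a)²⋯(Nk_l+a)²)` converges and is
strictly smaller than `(1/(N(Nn+a)))^l`. -/
theorem tail_tStar_lt
    (N a : ℕ) (h1 : 1 ≤ a) (h2 : a ≤ N) (n l : ℕ) (hl : 1 ≤ l) :
    Summable (fun k : Fin l → ℕ =>
      if (∀ i, n + 1 ≤ k i) ∧ (∀ i j : Fin l, i ≤ j → k j ≤ k i) then
        ∏ i : Fin l, (1 : ℝ) / ((N : ℝ) * k i + a) ^ 2
      else 0) ∧
    (∑' k : Fin l → ℕ,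
        if (∀ i, n + 1 ≤ k i) ∧ (∀ i j : Fin l, i ≤ j → k j ≤ k i) then
          ∏ i : Fin l, (1 : ℝ) / ((N : ℝ) * k i + a) ^ 2
        else 0)
      < (1 / ((N : ℝ) * ((N : ℝ) * n + a))) ^ l := by
  have ha : (0 : ℝ) < a := by exact_mod_cast h1
  have hN : (0 : ℝ) < N := by exact_mod_cast h1.trans h2
  obtain ⟨hfs, hfc⟩ := summable_and_tsum_tail_one_div_sq_lt hN ha n
  refine summable_and_tsum_lt_pow_of_le_prod hfs (fun k => ?_) hfc (by omega) (fun k => ?_)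
    fun k => ?_
  · split_ifs <;> positivity
  · split_ifs <;> positivity
  · split_ifs with hk
    · exact (prod_congr rfl fun i _ => (if_pos (hk.1 i)).symm).le
    · exact prod_nonneg fun i _ => by split_ifs <;> positivity
end

section
/- Let N ≥ 1 and a be integers with 1 ≤ a ≤ N, let d be a nonnegative integer, and let c_1, …, c_d be positive integers none of which equals 2 with c_1 ≥ 3. For z = (z_0,…,z_d) ∈ ℂ^{d+1} with all |z_j| < 1, let D_n(c; z) = ∑_{b_0,…,b_d ≥ 0} ⁿt*_{N,a}({2}^{b_0}, c_1, {2}^{b_1}, …, c_d, {2}^{b_d}) z_0^{2b_0}⋯z_d^{2b_d} and D(c; z) = ∑_{b_0,…,b_d ≥ 0} t*_{N,a}({2}^{b_0}, c_1, {2}^{b_1}, …, c_d, {2}^{b_d}) z_0^{2b_0}⋯z_d^{2b_d}. Then D_n(c; z) → D(c; z) as n → ∞ for every such z, and the convergence is uniform on every closed polydisc {|z_0| ≤ u_0, …, |z_d| ≤ u_d} with 0 ≤ u_j < 1 for all j. -/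
open Finset Filter

/-- The index `({2}^{b₀}, c₁, {2}^{b₁}, …, c_d, {2}^{b_d})` as a list. -/
def blockIndex (d : ℕ) (c : Fin d → ℕ) (b : Fin (d + 1) → ℕ) : List ℕ :=
  List.replicate (b 0) 2 ++
    (List.ofFn fun i : Fin d => c i :: List.replicate (b i.succ) 2).flatten

/-- The finite form `ⁿt*_{N,a}(s₁,…,s_u) = ∑_{n ≥ k₁ ≥ ⋯ ≥ k_u ≥ 0} ∏ᵢ (N kᵢ + a)^{-sᵢ}`. -/
noncomputable def tStarFin (N a n : ℕ) (s : List ℕ) : ℝ :=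
  ∑ k : Fin s.length → Fin (n + 1),
    if ∀ i j : Fin s.length, i ≤ j → (k j : ℕ) ≤ (k i : ℕ) then
      ∏ i : Fin s.length, (1 : ℝ) / ((N : ℝ) * (k i : ℕ) + a) ^ s.get i
    else 0

/-- The multiple t-star value of level `N`:
`t*_{N,a}(s₁,…,s_u) = ∑_{k₁ ≥ ⋯ ≥ k_u ≥ 0} ∏ᵢ (N kᵢ + a)^{-sᵢ}`. -/
noncomputable def tStar (N a : ℕ) (s : List ℕ) : ℝ :=
  ∑' k : Fin s.length → ℕ,
    if ∀ i j : Fin s.length, i ≤ j → k j ≤ k i then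
      ∏ i : Fin s.length, (1 : ℝ) / ((N : ℝ) * k i + a) ^ s.get i
    else 0

/-- The generating function `D_n(c;z)` of the finite forms. -/
noncomputable def Dgen (N a d : ℕ) (c : Fin d → ℕ) (n : ℕ) (z : Fin (d + 1) → ℂ) : ℂ :=
  ∑' b : Fin (d + 1) → ℕ,
    ((tStarFin N a n (blockIndex d c b) : ℝ) : ℂ) * ∏ j : Fin (d + 1), z j ^ (2 * b j)

/-- The generating function `D(c;z)` of the multiple t-star values of level `N`. -/
noncomputable def DgenInf (N a d : ℕ) (c : Fin d → ℕ) (z : Fin (d + 1) → ℂ) : ℂ :=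
  ∑' b : Fin (d + 1) → ℕ,
    ((tStar N a (blockIndex d c b) : ℝ) : ℂ) * ∏ j : Fin (d + 1), z j ^ (2 * b j)

noncomputable def Tfun (N a : ℕ) (s : List ℕ) (K : ℕ) : ℝ :=
  ∑ k ∈ Fintype.piFinset (fun _ : Fin s.length => Finset.range (K+1)),
    if ∀ i j : Fin s.length, i ≤ j → k j ≤ k i then
      ∏ i : Fin s.length, (1 : ℝ) / ((N : ℝ) * (k i) + a) ^ s.get i
    else 0

lemma tStarFin_eq_Tfun (N a n : ℕ) (s : List ℕ) : tStarFin N a n s = Tfun N a s n := by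
  classical
  rw [tStarFin, Tfun]
  refine Finset.sum_bij' (fun k _ => fun i => (k i : ℕ))
      (fun k hk => fun i => (⟨k i, by
        have := Fintype.mem_piFinset.1 hk i
        simpa [Finset.mem_range, Nat.lt_succ_iff] using this⟩ : Fin (n+1)))
      ?_ ?_ ?_ ?_ ?_
  · intro k _
    exact Fintype.mem_piFinset.2 fun i => Finset.mem_range.2 (Nat.lt_succ_of_le (Nat.lt_succ_iff.1 (k i).isLt))
  · intro k _; exact Finset.mem_univ _
  · intro k _; funext i; simp
  · intro k hk; funext i; simp
  · intro k _; rfl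

lemma Tfun_nil (N a K : ℕ) : Tfun N a [] K = 1 := by
  simp [Tfun]

lemma cond_cons (u k0 : ℕ) (k' : Fin u → ℕ) :
    (∀ i j : Fin (u+1), i ≤ j → (Fin.cons k0 k' : Fin (u+1) → ℕ) j ≤ (Fin.cons k0 k' : Fin (u+1) → ℕ) i)
      ↔ ((∀ i j : Fin u, i ≤ j → k' j ≤ k' i) ∧ ∀ i, k' i ≤ k0) := by
  constructor
  · intro h
    refine ⟨fun i j hij => ?_, fun i => ?_⟩
    · have := h i.succ j.succ (by simpa [Fin.succ_le_succ_iff] using hij)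
      simpa using this
    · have := h 0 i.succ (Fin.zero_le _)
      simpa using this
  · rintro ⟨h1, h2⟩ i j hij
    rcases Fin.eq_zero_or_eq_succ i with rfl | ⟨i', rfl⟩
    · rcases Fin.eq_zero_or_eq_succ j with rfl | ⟨j', rfl⟩
      · simp
      · simpa using h2 j'
    · rcases Fin.eq_zero_or_eq_succ j with rfl | ⟨j', rfl⟩
      · exact absurd (Fin.le_zero_iff.1 hij) (Fin.succ_ne_zero i')
      · simpa using h1 i' j' (by simpa [Fin.succ_le_succ_iff] using hij)

lemma Tfun_cons (N a : ℕ) (s0 : ℕ) (t : List ℕ) (K : ℕ) :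
    Tfun N a (s0 :: t) K
      = ∑ k0 ∈ Finset.range (K+1), ((1 : ℝ) / ((N : ℝ) * k0 + a) ^ s0) * Tfun N a t k0 := by
  classical
  rw [Tfun]
  simp only [List.length_cons]
  have hbij :
      (∑ k ∈ Fintype.piFinset (fun _ : Fin (t.length+1) => Finset.range (K+1)),
        if ∀ i j : Fin (t.length+1), i ≤ j → k j ≤ k i then
          ∏ i : Fin (t.length+1), (1 : ℝ) / ((N : ℝ) * (k i) + a) ^ (s0 :: t).get i
        else 0)
      = ∑ p ∈ (Finset.range (K+1)) ×ˢ (Fintype.piFinset (fun _ : Fin t.length => Finset.range (K+1))),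
          (fun k : Fin (t.length+1) → ℕ =>
            if ∀ i j : Fin (t.length+1), i ≤ j → k j ≤ k i then
              ∏ i : Fin (t.length+1), (1 : ℝ) / ((N : ℝ) * (k i) + a) ^ (s0 :: t).get i
            else 0) (Fin.cons p.1 p.2) := by
    refine Finset.sum_nbij' (fun k => (k 0, fun i => k i.succ)) (fun p => Fin.cons p.1 p.2)
      ?_ ?_ ?_ ?_ ?_
    · intro k hk
      have := Fintype.mem_piFinset.1 hk
      exact Finset.mem_product.2 ⟨this 0, Fintype.mem_piFinset.2 fun i => this i.succ⟩
    · intro p hp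
      obtain ⟨h1, h2⟩ := Finset.mem_product.1 hp
      refine Fintype.mem_piFinset.2 fun i => ?_
      rcases Fin.eq_zero_or_eq_succ i with rfl | ⟨i', rfl⟩
      · simpa using h1
      · simpa using Fintype.mem_piFinset.1 h2 i'
    · intro k _
      funext i
      rcases Fin.eq_zero_or_eq_succ i with rfl | ⟨i', rfl⟩ <;> simp
    · intro p _
      ext <;> simp
    · intro k _
      have hk : (Fin.cons (k 0) (fun i => k i.succ) : Fin (t.length+1) → ℕ) = k := by
        funext i
        rcases Fin.eq_zero_or_eq_succ i with rfl | ⟨i', rfl⟩ <;> simp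
      exact (congrArg (fun q : Fin (t.length+1) → ℕ =>
        if ∀ i j : Fin (t.length+1), i ≤ j → q j ≤ q i then
          ∏ i : Fin (t.length+1), (1 : ℝ) / ((N : ℝ) * (q i) + a) ^ (s0 :: t).get i
        else 0) hk).symm
  rw [hbij, Finset.sum_product]
  refine Finset.sum_congr rfl fun k0 hk0 => ?_
  have hk0K : k0 ≤ K := Nat.lt_succ_iff.1 (Finset.mem_range.1 hk0)
  have hsubset : Fintype.piFinset (fun _ : Fin t.length => Finset.range (k0+1))
      ⊆ Fintype.piFinset (fun _ : Fin t.length => Finset.range (K+1)) := by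
    intro k' hk'
    exact Fintype.mem_piFinset.2 fun i => Finset.mem_range.2
      (lt_of_lt_of_le (Finset.mem_range.1 (Fintype.mem_piFinset.1 hk' i)) (by omega))
  have hzero : ∀ k' ∈ Fintype.piFinset (fun _ : Fin t.length => Finset.range (K+1)),
      k' ∉ Fintype.piFinset (fun _ : Fin t.length => Finset.range (k0+1)) →
      (fun k : Fin (t.length+1) → ℕ =>
            if ∀ i j : Fin (t.length+1), i ≤ j → k j ≤ k i then
              ∏ i : Fin (t.length+1), (1 : ℝ) / ((N : ℝ) * (k i) + a) ^ (s0 :: t).get i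
            else 0) (Fin.cons k0 k') = 0 := by
    intro k' _ hnot
    simp only [Fintype.mem_piFinset, not_forall] at hnot
    obtain ⟨i, hi⟩ := hnot
    have hko : ¬ k' i ≤ k0 := by
      intro h; exact hi (Finset.mem_range.2 (Nat.lt_succ_of_le h))
    simp only []
    rw [if_neg]
    rw [cond_cons]
    rintro ⟨-, h2⟩
    exact hko (h2 i)
  rw [← Finset.sum_subset hsubset hzero, Tfun, Finset.mul_sum]
  refine Finset.sum_congr rfl fun k' hk' => ?_
  have hB : ∀ i, k' i ≤ k0 := fun i =>
    Nat.lt_succ_iff.1 (Finset.mem_range.1 (Fintype.mem_piFinset.1 hk' i))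
  simp only []
  rw [Fin.prod_univ_succ]
  simp only [cond_cons, hB, and_true, implies_true, Fin.cons_zero, Fin.cons_succ,
    List.get_cons_zero, List.get_cons_succ, one_div]
  split_ifs with h
  · congr 1
  · ring

section Bounds
variable {N a : ℕ}

lemma Tfun_nonneg (N a : ℕ) (s : List ℕ) (K : ℕ) : 0 ≤ Tfun N a s K := by
  refine Finset.sum_nonneg fun k _ => ?_
  split_ifs
  · exact Finset.prod_nonneg fun i _ => by positivity
  · exact le_refl 0

lemma den_ge_one (h1 : 1 ≤ a) (k : ℕ) : (1:ℝ) ≤ (N:ℝ) * k + a := by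
  have : (1:ℝ) ≤ (a:ℝ) := by exact_mod_cast h1
  have : (0:ℝ) ≤ (N:ℝ) * k := by positivity
  linarith

lemma den_ge_succ (h1 : 1 ≤ a) (h2 : a ≤ N) (k : ℕ) : ((k:ℝ)+1) ≤ (N:ℝ) * k + a := by
  have hN : (1:ℝ) ≤ (N:ℝ) := by
    have : 1 ≤ N := le_trans h1 h2
    exact_mod_cast this
  have ha : (1:ℝ) ≤ (a:ℝ) := by exact_mod_cast h1
  have hk : (0:ℝ) ≤ (k:ℝ) := by positivity
  nlinarith

/-- The partial Euler-type product bounding star sums of 2's. -/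
noncomputable def Gp (N a : ℕ) (K : ℕ) : ℝ :=
  ∏ k ∈ Finset.range K, (1 - 1/((N:ℝ)*(k+1)+a)^2)⁻¹

lemma xfac_mem (h1 : 1 ≤ a) (h2 : a ≤ N) (k : ℕ) :
    0 < 1/((N:ℝ)*(k+1)+a)^2 ∧ 1/((N:ℝ)*(k+1)+a)^2 ≤ 1/4 := by
  have h := den_ge_succ h1 h2 (k+1)
  push_cast at h
  have hpos : (0:ℝ) < (N:ℝ)*(k+1)+a := by nlinarith
  constructor
  · positivity
  · rw [div_le_div_iff₀ (by positivity) (by norm_num)]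
    nlinarith

lemma Gp_ge_one (h1 : 1 ≤ a) (h2 : a ≤ N) (K : ℕ) : 1 ≤ Gp N a K := by
  rw [Gp]
  calc (1:ℝ) = ∏ _k ∈ Finset.range K, (1:ℝ) := by simp
    _ ≤ ∏ k ∈ Finset.range K, (1 - 1/((N:ℝ)*(k+1)+a)^2)⁻¹ := by
        refine Finset.prod_le_prod (by norm_num) fun k _ => ?_
        obtain ⟨hx0, hx4⟩ := xfac_mem h1 h2 k
        have h1x : (0:ℝ) < 1 - 1/((N:ℝ)*(k+1)+a)^2 := by linarith
        have h2x : 1 - 1/((N:ℝ)*(k+1)+a)^2 ≤ 1 := by linarith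
        calc (1:ℝ) = 1⁻¹ := by norm_num
          _ ≤ (1 - 1/((N:ℝ)*(k+1)+a)^2)⁻¹ := inv_anti₀ h1x h2x

lemma Gp_le_nine (h1 : 1 ≤ a) (h2 : a ≤ N) (K : ℕ) : Gp N a K ≤ 9 := by
  have hfac : ∀ k : ℕ, (1 - 1/((N:ℝ)*(k+1)+a)^2)⁻¹ ≤ Real.exp (2 * (1/((N:ℝ)*(k+1)+a)^2)) := by
    intro k
    obtain ⟨hx0, hx4⟩ := xfac_mem h1 h2 k
    set x := 1/((N:ℝ)*(k+1)+a)^2 with hx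
    have h1x : (0:ℝ) < 1 - x := by linarith
    have hstep : (1 - x)⁻¹ ≤ 1 + 2*x := by
      rw [inv_le_iff_one_le_mul₀ h1x]
      nlinarith
    refine le_trans hstep ?_
    have := Real.add_one_le_exp (2*x)
    linarith
  have hsum : ∑ k ∈ Finset.range K, 2 * (1/((N:ℝ)*(k+1)+a)^2) ≤ 2 := by
    have hterm : ∀ k : ℕ, (1/((N:ℝ)*(k+1)+a)^2) ≤ 1/((k:ℝ)+1) - 1/(((k:ℝ)+1)+1) := by
      intro k
      have h := den_ge_succ h1 h2 (k+1)
      push_cast at h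
      have h2' : ((k:ℝ)+2) ≤ (N:ℝ)*(k+1)+a := by linarith
      have hpos : (0:ℝ) < (k:ℝ)+1 := by positivity
      have hpos2 : (0:ℝ) < (k:ℝ)+2 := by positivity
      have heq : 1/((k:ℝ)+1) - 1/(((k:ℝ)+1)+1) = 1/(((k:ℝ)+1)*((k:ℝ)+2)) := by
        rw [div_sub_div _ _ (by positivity) (by positivity)]
        norm_num
        left
        ring
      rw [heq]
      rw [div_le_div_iff₀ (by positivity) (by positivity)]
      nlinarith
    have htele : ∑ k ∈ Finset.range K, (1/((k:ℝ)+1) - 1/(((k:ℝ)+1)+1)) ≤ 1 := by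
      have := Finset.sum_range_sub' (f := fun k : ℕ => 1/((k:ℝ)+1)) K
      push_cast at this ⊢
      rw [this]
      have hKp : (0:ℝ) ≤ 1/((K:ℝ)+1) := by positivity
      norm_num
      linarith [hKp]
    calc ∑ k ∈ Finset.range K, 2 * (1/((N:ℝ)*(k+1)+a)^2)
        ≤ ∑ k ∈ Finset.range K, 2*(1/((k:ℝ)+1) - 1/(((k:ℝ)+1)+1)) := by
          refine Finset.sum_le_sum fun k _ => ?_
          have := hterm k; linarith
      _ = 2 * ∑ k ∈ Finset.range K, (1/((k:ℝ)+1) - 1/(((k:ℝ)+1)+1)) := by rw [Finset.mul_sum]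
      _ ≤ 2 := by linarith [htele]
  calc Gp N a K ≤ ∏ k ∈ Finset.range K, Real.exp (2 * (1/((N:ℝ)*(k+1)+a)^2)) := by
        refine Finset.prod_le_prod (fun k _ => ?_) (fun k _ => hfac k)
        obtain ⟨hx0, hx4⟩ := xfac_mem h1 h2 k
        exact inv_nonneg.2 (by linarith)
    _ = Real.exp (∑ k ∈ Finset.range K, 2 * (1/((N:ℝ)*(k+1)+a)^2)) := by
        rw [Real.exp_sum]
    _ ≤ Real.exp 2 := Real.exp_le_exp.2 hsum
    _ ≤ 9 := by
        have h := Real.exp_one_lt_d9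
        calc Real.exp 2 = Real.exp 1 * Real.exp 1 := by rw [← Real.exp_add]; norm_num
          _ ≤ 2.7182818286 * 2.7182818286 := by nlinarith [Real.exp_pos 1]
          _ ≤ 9 := by norm_num

lemma Gp_telescope (h1 : 1 ≤ a) (h2 : a ≤ N) (K : ℕ) :
    ∑ k ∈ Finset.range K, (1/((N:ℝ)*(k+1)+a)^2) * Gp N a (k+1) = Gp N a K - 1 := by
  have hstep : ∀ k : ℕ, (1/((N:ℝ)*(k+1)+a)^2) * Gp N a (k+1) = Gp N a (k+1) - Gp N a k := by
    intro k
    obtain ⟨hx0, hx4⟩ := xfac_mem h1 h2 k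
    have hsucc : Gp N a (k+1) = Gp N a k * (1 - 1/((N:ℝ)*(k+1)+a)^2)⁻¹ := by
      rw [Gp, Finset.prod_range_succ]; rfl
    have hne : (1 - 1/((N:ℝ)*(k+1)+a)^2) ≠ 0 := by linarith
    have : Gp N a k = Gp N a (k+1) * (1 - 1/((N:ℝ)*(k+1)+a)^2) := by
      rw [hsucc, mul_assoc, inv_mul_cancel₀ hne, mul_one]
    rw [this]; ring
  calc ∑ k ∈ Finset.range K, (1/((N:ℝ)*(k+1)+a)^2) * Gp N a (k+1)
      = ∑ k ∈ Finset.range K, (Gp N a (k+1) - Gp N a k) := by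
        exact Finset.sum_congr rfl fun k _ => hstep k
    _ = Gp N a K - Gp N a 0 := Finset.sum_range_sub (fun k => Gp N a k) K
    _ = Gp N a K - 1 := by
        congr 1

end Bounds

section Bounds2
variable {N a : ℕ}

lemma Tfun_rep_zero (h1 : 1 ≤ a) (b : ℕ) (t : List ℕ) :
    Tfun N a (List.replicate b 2 ++ t) 0 ≤ Tfun N a t 0 := by
  induction b with
  | zero => simp
  | succ b ih =>
      rw [List.replicate_succ, List.cons_append, Tfun_cons]
      rw [Finset.sum_range_one]
      have hd := den_ge_one (N := N) h1 0
      have h0 : (1:ℝ) / ((N:ℝ) * ((0:ℕ):ℝ) + a) ^ 2 ≤ 1 := by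
        rw [div_le_one (by positivity)]
        nlinarith
      calc ((1:ℝ) / ((N:ℝ) * ((0:ℕ):ℝ) + a) ^ 2) * Tfun N a (List.replicate b 2 ++ t) 0
          ≤ 1 * Tfun N a t 0 := by
            exact mul_le_mul h0 ih (Tfun_nonneg _ _ _ _) (by norm_num)
        _ = Tfun N a t 0 := one_mul _

lemma twoBlock (h1 : 1 ≤ a) (h2 : a ≤ N) (t : List ℕ) (M : ℝ) (hM : 0 ≤ M) :
    ∀ b K, (∀ k, k ≤ K → Tfun N a t k ≤ M) →
      Tfun N a (List.replicate b 2 ++ t) K ≤ M * ((b:ℝ)+1) * Gp N a K := by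
  intro b
  induction b with
  | zero =>
      intro K hK
      simp only [List.replicate_zero, List.nil_append, Nat.cast_zero, zero_add, mul_one]
      calc Tfun N a t K ≤ M := hK K le_rfl
        _ = M * 1 := (mul_one M).symm
        _ ≤ M * Gp N a K := mul_le_mul_of_nonneg_left (Gp_ge_one h1 h2 K) hM
  | succ b ih =>
      intro K hK
      rw [List.replicate_succ, List.cons_append, Tfun_cons, Finset.sum_range_succ']
      have hzero : ((1:ℝ) / ((N:ℝ) * ((0:ℕ):ℝ) + a) ^ 2) * Tfun N a (List.replicate b 2 ++ t) 0 ≤ M := by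
        have hd := den_ge_one (N := N) h1 0
        have h0 : (1:ℝ) / ((N:ℝ) * ((0:ℕ):ℝ) + a) ^ 2 ≤ 1 := by
          rw [div_le_one (by positivity)]
          nlinarith
        calc ((1:ℝ) / ((N:ℝ) * ((0:ℕ):ℝ) + a) ^ 2) * Tfun N a (List.replicate b 2 ++ t) 0
            ≤ 1 * M := by
              refine mul_le_mul h0 ?_ (Tfun_nonneg _ _ _ _) (by norm_num)
              exact le_trans (Tfun_rep_zero h1 b t) (hK 0 (Nat.zero_le K))
          _ = M := one_mul M
      have hmain : ∀ k ∈ Finset.range K,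
          (1:ℝ) / ((N:ℝ) * ((k+1:ℕ):ℝ) + a) ^ 2 * Tfun N a (List.replicate b 2 ++ t) (k+1)
            ≤ (1 / ((N:ℝ) * ((k+1:ℕ):ℝ) + a) ^ 2) * (M * ((b:ℝ)+1) * Gp N a (k+1)) := by
        intro k hk
        have hk1K : k + 1 ≤ K := Finset.mem_range.1 hk
        exact mul_le_mul_of_nonneg_left
          (ih (k+1) (fun k' hk' => hK k' (le_trans hk' hk1K))) (by positivity)
      refine le_trans (add_le_add (Finset.sum_le_sum hmain) hzero) ?_
      have hsum_eq : ∑ k ∈ Finset.range K,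
            (1 / ((N:ℝ) * ((k+1:ℕ):ℝ) + a) ^ 2) * (M * ((b:ℝ)+1) * Gp N a (k+1))
          = M * ((b:ℝ)+1) * (Gp N a K - 1) := by
        rw [← Gp_telescope h1 h2 K, Finset.mul_sum]
        refine Finset.sum_congr rfl fun k _ => ?_
        push_cast
        ring
      rw [hsum_eq]
      have hG := Gp_ge_one h1 h2 K
      have hp1 : (0:ℝ) ≤ M * Gp N a K := mul_nonneg hM (by linarith)
      have hp2 : (0:ℝ) ≤ M * (b:ℝ) := mul_nonneg hM (by positivity)
      push_cast
      nlinarith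
end Bounds2

section Bounds3
variable {N a : ℕ}

lemma bern (t ε : ℝ) (ht0 : 0 ≤ t) (ht1 : t ≤ 1) (hε0 : 0 < ε) (hε1 : ε ≤ 1) :
    (1 - t) ^ ε ≤ 1 - ε * t := by
  have hεt : ε * t ≤ 1 := by nlinarith
  have hb := one_add_mul_self_le_rpow_one_add (s := -(ε*t)) (by linarith) (p := 1/ε)
    (by rw [le_div_iff₀ hε0]; linarith)
  have hkey : 1 - t ≤ (1 - ε*t) ^ (1/ε) := by
    have : 1 + (1/ε) * (-(ε*t)) = 1 - t := by
      field_simp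
      ring
    calc 1 - t = 1 + (1/ε) * (-(ε*t)) := this.symm
      _ ≤ (1 + -(ε*t)) ^ (1/ε) := hb
      _ = (1 - ε*t) ^ (1/ε) := by ring_nf
  calc (1 - t) ^ ε ≤ ((1 - ε*t) ^ (1/ε)) ^ ε := by
        exact Real.rpow_le_rpow (by linarith) hkey hε0.le
    _ = (1 - ε*t) ^ ((1/ε) * ε) := by
        rw [← Real.rpow_mul (by linarith)]
    _ = 1 - ε*t := by
        rw [one_div, inv_mul_cancel₀ (ne_of_gt hε0), Real.rpow_one]

lemma harm_le (ε : ℝ) (hε0 : 0 < ε) (hε1 : ε ≤ 1) :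
    ∀ K : ℕ, ∑ k ∈ Finset.range (K+1), (1:ℝ)/((k:ℝ)+1) ≤ (1/ε) * ((K:ℝ)+1) ^ ε := by
  intro K
  induction K with
  | zero =>
      have h0 : ∑ k ∈ Finset.range (0+1), (1:ℝ)/((k:ℝ)+1) = 1 := by
        rw [Finset.sum_range_one]; norm_num
      rw [h0, show ((0:ℕ):ℝ)+1 = 1 by norm_num, Real.one_rpow, mul_one, le_div_iff₀ hε0, one_mul]
      exact hε1
  | succ K ih =>
      rw [Finset.sum_range_succ]
      have hK2 : (0:ℝ) < (K:ℝ)+2 := by positivity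
      have hkey : ε/((K:ℝ)+2) ≤ ((K:ℝ)+2) ^ ε - ((K:ℝ)+1) ^ ε := by
        have hsplit : ((K:ℝ)+1) = ((K:ℝ)+2) * (1 - 1/((K:ℝ)+2)) := by
          field_simp
          ring
        have hbern := bern (1/((K:ℝ)+2)) ε (by positivity)
          (by rw [div_le_one hK2]; linarith) hε0 hε1
        have h1 : ((K:ℝ)+1) ^ ε = ((K:ℝ)+2) ^ ε * (1 - 1/((K:ℝ)+2)) ^ ε := by
          rw [hsplit, Real.mul_rpow (by positivity) (by
            rw [sub_nonneg, div_le_one hK2]; linarith)]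
        have h2 : ((K:ℝ)+2) ^ ε * (1 - 1/((K:ℝ)+2)) ^ ε
            ≤ ((K:ℝ)+2) ^ ε * (1 - ε * (1/((K:ℝ)+2))) := by
          exact mul_le_mul_of_nonneg_left hbern (Real.rpow_nonneg (by positivity) _)
        have h3 : (1:ℝ) ≤ ((K:ℝ)+2) ^ ε := Real.one_le_rpow (by linarith) hε0.le
        have h4 : ((K:ℝ)+2) ^ ε * (1 - ε * (1/((K:ℝ)+2)))
            = ((K:ℝ)+2) ^ ε - (ε/((K:ℝ)+2)) * ((K:ℝ)+2) ^ ε := by ring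
        have h5 : (ε/((K:ℝ)+2)) * 1 ≤ (ε/((K:ℝ)+2)) * ((K:ℝ)+2) ^ ε := by
          exact mul_le_mul_of_nonneg_left h3 (by positivity)
        nlinarith
      have hcast : ((K+1:ℕ):ℝ) = (K:ℝ)+1 := by push_cast; ring
      rw [hcast]
      have hmono : (1/ε) * ((K:ℝ)+1) ^ ε + ε/((K:ℝ)+2) * (1/ε) ≤ (1/ε) * ((K:ℝ)+2) ^ ε := by
        have := mul_le_mul_of_nonneg_left hkey (le_of_lt (by positivity : (0:ℝ) < 1/ε))
        nlinarith
      have heps : ε/((K:ℝ)+2) * (1/ε) = 1/((K:ℝ)+2) := by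
        field_simp
      have : (1:ℝ)/((K:ℝ)+1+1) = 1/((K:ℝ)+2) := by ring_nf
      rw [this]
      have goal2 : (1/ε) * ((K:ℝ)+1+1) ^ ε = (1/ε) * ((K:ℝ)+2) ^ ε := by
        rw [show (K:ℝ)+1+1 = (K:ℝ)+2 by ring]
      rw [goal2]
      calc ∑ k ∈ Finset.range (K+1), (1:ℝ)/((k:ℝ)+1) + 1/((K:ℝ)+2)
          ≤ (1/ε) * ((K:ℝ)+1) ^ ε + ε/((K:ℝ)+2) * (1/ε) := by
            rw [heps]
            exact add_le_add ih le_rfl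
        _ ≤ (1/ε) * ((K:ℝ)+2) ^ ε := hmono

lemma sumsq : ∀ n : ℕ, ∑ k ∈ Finset.range n, (1:ℝ)/((k:ℝ)+1)^2 ≤ 2 := by
  have haux : ∀ n : ℕ, ∑ k ∈ Finset.range n, (1:ℝ)/((k:ℝ)+1)^2 ≤ 2 - 2/((n:ℝ)+1) := by
    intro n
    induction n with
    | zero => simp
    | succ n ih =>
        rw [Finset.sum_range_succ]
        have h1 : (1:ℝ)/(((n:ℕ):ℝ)+1)^2 ≤ 2/((n:ℝ)+1) - 2/((n:ℝ)+2) := by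
          have hp1 : (0:ℝ) < (n:ℝ)+1 := by positivity
          have hp2 : (0:ℝ) < (n:ℝ)+2 := by positivity
          have heq : 2/((n:ℝ)+1) - 2/((n:ℝ)+2) = 2/(((n:ℝ)+1)*((n:ℝ)+2)) := by
            field_simp
            ring
          rw [heq, div_le_div_iff₀ (by positivity) (by positivity)]
          nlinarith
        have hcast : ((n+1:ℕ):ℝ) = (n:ℝ)+1 := by push_cast; ring
        rw [hcast]
        have : (2:ℝ)/((n:ℝ)+1+1) = 2/((n:ℝ)+2) := by ring_nf
        rw [this]
        linarith
  intro n
  have h := haux n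
  have : (0:ℝ) ≤ 2/((n:ℝ)+1) := by positivity
  linarith

lemma oneStep (h1 : 1 ≤ a) (h2 : a ≤ N) (c : ℕ) (hcpos : 1 ≤ c) (t : List ℕ)
    (C δ ε : ℝ) (hC : 0 ≤ C) (hδ : 0 ≤ δ) (hε0 : 0 < ε) (hε1 : ε ≤ 1)
    (ht : ∀ k : ℕ, Tfun N a t k ≤ C * ((k:ℝ)+1) ^ δ) (K : ℕ) :
    Tfun N a (c :: t) K ≤ (C / ε) * ((K:ℝ)+1) ^ (δ + ε) := by
  rw [Tfun_cons]
  have hterm : ∀ k ∈ Finset.range (K+1),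
      ((1:ℝ) / ((N:ℝ) * (k:ℝ) + a) ^ c) * Tfun N a t k
        ≤ (C * ((K:ℝ)+1) ^ δ) * (1/((k:ℝ)+1)) := by
    intro k hk
    have hkK : k ≤ K := Nat.lt_succ_iff.1 (Finset.mem_range.1 hk)
    have hden := den_ge_succ h1 h2 k
    have hden1 := den_ge_one (N := N) h1 k
    have hpow : ((k:ℝ)+1) ≤ ((N:ℝ) * (k:ℝ) + a) ^ c := by
      calc ((k:ℝ)+1) ≤ (N:ℝ) * (k:ℝ) + a := hden
        _ ≤ ((N:ℝ) * (k:ℝ) + a) ^ c := le_self_pow₀ hden1 (by omega)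
    have hfrac : (1:ℝ) / ((N:ℝ) * (k:ℝ) + a) ^ c ≤ 1/((k:ℝ)+1) := by
      apply div_le_div_of_nonneg_left (by norm_num) (by positivity) hpow
    have hT : Tfun N a t k ≤ C * ((K:ℝ)+1) ^ δ := by
      refine le_trans (ht k) ?_
      refine mul_le_mul_of_nonneg_left ?_ hC
      refine Real.rpow_le_rpow (by positivity) ?_ hδ
      have hkr : ((k:ℝ)) ≤ (K:ℝ) := by exact_mod_cast hkK
      linarith
    calc ((1:ℝ) / ((N:ℝ) * (k:ℝ) + a) ^ c) * Tfun N a t k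
        ≤ (1/((k:ℝ)+1)) * (C * ((K:ℝ)+1) ^ δ) := by
          exact mul_le_mul hfrac hT (Tfun_nonneg _ _ _ _) (by positivity)
      _ = (C * ((K:ℝ)+1) ^ δ) * (1/((k:ℝ)+1)) := by ring
  refine le_trans (Finset.sum_le_sum hterm) ?_
  rw [← Finset.mul_sum]
  have hharm := harm_le ε hε0 hε1 K
  have hCp : (0:ℝ) ≤ C * ((K:ℝ)+1) ^ δ := mul_nonneg hC (Real.rpow_nonneg (by positivity) _)
  calc (C * ((K:ℝ)+1) ^ δ) * ∑ k ∈ Finset.range (K+1), (1:ℝ)/((k:ℝ)+1)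
      ≤ (C * ((K:ℝ)+1) ^ δ) * ((1/ε) * ((K:ℝ)+1) ^ ε) :=
        mul_le_mul_of_nonneg_left hharm hCp
    _ = (C/ε) * (((K:ℝ)+1) ^ δ * ((K:ℝ)+1) ^ ε) := by ring
    _ = (C/ε) * ((K:ℝ)+1) ^ (δ + ε) := by
        rw [← Real.rpow_add (by positivity)]

lemma threeStep (h1 : 1 ≤ a) (h2 : a ≤ N) (c : ℕ) (hc3 : 3 ≤ c) (t : List ℕ)
    (C δ : ℝ) (hC : 0 ≤ C) (hδ0 : 0 ≤ δ) (hδ1 : δ ≤ 1)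
    (ht : ∀ k : ℕ, Tfun N a t k ≤ C * ((k:ℝ)+1) ^ δ) (K : ℕ) :
    Tfun N a (c :: t) K ≤ 2 * C := by
  rw [Tfun_cons]
  have hterm : ∀ k ∈ Finset.range (K+1),
      ((1:ℝ) / ((N:ℝ) * (k:ℝ) + a) ^ c) * Tfun N a t k ≤ C * ((1:ℝ)/((k:ℝ)+1)^2) := by
    intro k _
    have hden := den_ge_succ h1 h2 k
    have hden1 := den_ge_one (N := N) h1 k
    have hk1 : (0:ℝ) < (k:ℝ)+1 := by positivity
    have hpow3 : ((k:ℝ)+1)^3 ≤ ((N:ℝ) * (k:ℝ) + a) ^ c := by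
      calc ((k:ℝ)+1)^3 ≤ ((N:ℝ)*(k:ℝ)+a)^3 := pow_le_pow_left₀ (by positivity) hden 3
        _ ≤ ((N:ℝ)*(k:ℝ)+a)^c := pow_le_pow_right₀ hden1 hc3
    have hfrac : (1:ℝ)/((N:ℝ)*(k:ℝ)+a)^c ≤ 1/((k:ℝ)+1)^3 :=
      div_le_div_of_nonneg_left (by norm_num) (by positivity) hpow3
    have hrp : ((k:ℝ)+1) ^ δ ≤ (k:ℝ)+1 := by
      calc ((k:ℝ)+1)^δ ≤ ((k:ℝ)+1)^(1:ℝ) :=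
            Real.rpow_le_rpow_of_exponent_le (by linarith) hδ1
        _ = (k:ℝ)+1 := Real.rpow_one _
    calc ((1:ℝ) / ((N:ℝ) * (k:ℝ) + a) ^ c) * Tfun N a t k
        ≤ (1/((k:ℝ)+1)^3) * (C * ((k:ℝ)+1)^δ) := by
          refine mul_le_mul hfrac (ht k) (Tfun_nonneg _ _ _ _) (by positivity)
      _ ≤ (1/((k:ℝ)+1)^3) * (C * ((k:ℝ)+1)) := by
          refine mul_le_mul_of_nonneg_left (mul_le_mul_of_nonneg_left hrp hC) (by positivity)
      _ = C * ((1:ℝ)/((k:ℝ)+1)^2) := by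
          field_simp
  refine le_trans (Finset.sum_le_sum hterm) ?_
  rw [← Finset.mul_sum]
  have hs := sumsq (K+1)
  calc C * ∑ k ∈ Finset.range (K+1), (1:ℝ)/((k:ℝ)+1)^2
      ≤ C * 2 := mul_le_mul_of_nonneg_left hs hC
    _ = 2 * C := by ring

end Bounds3

lemma blockIndex_zero (c : Fin 0 → ℕ) (b : Fin 1 → ℕ) :
    blockIndex 0 c b = List.replicate (b 0) 2 ++ [] := by
  simp [blockIndex]

lemma blockIndex_succ (d : ℕ) (c : Fin (d+1) → ℕ) (b : Fin (d+2) → ℕ) :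
    blockIndex (d+1) c b
      = List.replicate (b 0) 2 ++
          (c 0 :: blockIndex d (fun i => c i.succ) (fun i => b i.succ)) := by
  rw [blockIndex, blockIndex, List.ofFn_succ, List.flatten_cons]
  simp only [List.cons_append, List.append_assoc]

section Main
variable {N a : ℕ}

lemma inner_bound (h1 : 1 ≤ a) (h2 : a ≤ N) (ε : ℝ) (hε0 : 0 < ε) (hε1 : ε ≤ 1) :
    ∀ d : ℕ, ε * d ≤ 1 → ∀ c : Fin d → ℕ, (∀ i, 1 ≤ c i) →
    ∃ A : ℝ, 0 ≤ A ∧ ∀ (b : Fin (d+1) → ℕ) (K : ℕ),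
      Tfun N a (blockIndex d c b) K
        ≤ A * (∏ j, ((b j : ℝ)+1)) * ((K:ℝ)+1) ^ (ε * d) := by
  intro d
  induction d with
  | zero =>
      intro _ c _
      refine ⟨9, by norm_num, fun b K => ?_⟩
      rw [blockIndex_zero]
      have htwo := twoBlock h1 h2 [] 1 (by norm_num) (b 0) K
        (fun k _ => le_of_eq (Tfun_nil N a k))
      calc Tfun N a (List.replicate (b 0) 2 ++ []) K
          ≤ 1 * (((b 0 : ℕ):ℝ)+1) * Gp N a K := htwo
        _ ≤ 9 * (∏ j, ((b j : ℝ)+1)) * ((K:ℝ)+1) ^ (ε * (0:ℕ)) := by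
            rw [Fin.prod_univ_one]
            have hG := Gp_le_nine h1 h2 K
            have hG1 := Gp_ge_one h1 h2 K
            have hb : (0:ℝ) ≤ (b 0 : ℝ) := by positivity
            rw [show ε * ((0:ℕ):ℝ) = 0 by norm_num, Real.rpow_zero, mul_one, one_mul]
            nlinarith
  | succ d ih =>
      intro hεd c hc
      have hεd' : ε * d ≤ 1 := by
        have : (d:ℝ) ≤ ((d+1:ℕ):ℝ) := by push_cast; linarith
        nlinarith
      obtain ⟨A, hA0, hA⟩ := ih hεd' (fun i => c i.succ) (fun i => hc i.succ)
      refine ⟨9 * (A / ε), by positivity, fun b K => ?_⟩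
      rw [blockIndex_succ]
      set b' : Fin (d+1) → ℕ := fun i => b i.succ with hb'
      set P : ℝ := ∏ j, ((b' j : ℝ)+1) with hP
      have hPnn : 0 ≤ P := Finset.prod_nonneg fun j _ => by positivity
      have hstep1 : ∀ k : ℕ,
          Tfun N a (c 0 :: blockIndex d (fun i => c i.succ) b') k
            ≤ ((A * P) / ε) * ((k:ℝ)+1) ^ (ε * d + ε) := by
        intro k
        exact oneStep h1 h2 (c 0) (hc 0) _ (A * P) (ε * d) ε
          (mul_nonneg hA0 hPnn) (by positivity) hε0 hε1
          (fun k' => by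
            have := hA b' k'
            calc Tfun N a (blockIndex d (fun i => c i.succ) b') k'
                ≤ A * P * ((k':ℝ)+1) ^ (ε * d) := by
                  rw [hP]
                  exact this
              _ = A * P * ((k':ℝ)+1) ^ (ε * d) := rfl) k
      have hM : ∀ k, k ≤ K →
          Tfun N a (c 0 :: blockIndex d (fun i => c i.succ) b') k
            ≤ ((A * P) / ε) * ((K:ℝ)+1) ^ (ε * d + ε) := by
        intro k hk
        refine le_trans (hstep1 k) ?_
        refine mul_le_mul_of_nonneg_left ?_ (by positivity)
        refine Real.rpow_le_rpow (by positivity) ?_ (by positivity)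
        have : ((k:ℝ)) ≤ (K:ℝ) := by exact_mod_cast hk
        linarith
      have htwo := twoBlock h1 h2 _ (((A * P) / ε) * ((K:ℝ)+1) ^ (ε * d + ε))
        (by positivity) (b 0) K hM
      refine le_trans htwo ?_
      have hexp : ε * d + ε = ε * ((d+1:ℕ):ℝ) := by push_cast; ring
      have hprod : (∏ j : Fin (d+2), ((b j : ℝ)+1)) = ((b 0 : ℝ)+1) * P := by
        rw [hP, Fin.prod_univ_succ]
      rw [hprod, ← hexp]
      have hG := Gp_le_nine h1 h2 K
      have hG1 := Gp_ge_one h1 h2 K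
      have hrp : (0:ℝ) ≤ ((K:ℝ)+1) ^ (ε * d + ε) := Real.rpow_nonneg (by positivity) _
      have hb0 : (0:ℝ) ≤ (b 0 : ℝ) := by positivity
      have key : ((A * P) / ε) * ((K:ℝ)+1) ^ (ε * d + ε) * (((b 0:ℕ):ℝ)+1) * Gp N a K
          ≤ 9 * (A / ε) * (((b 0:ℕ):ℝ)+1) * P * ((K:ℝ)+1) ^ (ε * d + ε) := by
        have hAPε : (0:ℝ) ≤ (A * P) / ε := by positivity
        have h9 : Gp N a K ≤ 9 := hG
        have base : (0:ℝ) ≤ ((A * P) / ε) * ((K:ℝ)+1) ^ (ε * d + ε) * (((b 0:ℕ):ℝ)+1) :=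
          by positivity
        calc ((A * P) / ε) * ((K:ℝ)+1) ^ (ε * d + ε) * (((b 0:ℕ):ℝ)+1) * Gp N a K
            ≤ ((A * P) / ε) * ((K:ℝ)+1) ^ (ε * d + ε) * (((b 0:ℕ):ℝ)+1) * 9 :=
              mul_le_mul_of_nonneg_left h9 base
          _ = 9 * (A / ε) * (((b 0:ℕ):ℝ)+1) * P * ((K:ℝ)+1) ^ (ε * d + ε) := by ring
      calc ((A * P) / ε) * ((K:ℝ)+1) ^ (ε * d + ε) * (((b 0:ℕ):ℝ)+1) * Gp N a K
          ≤ 9 * (A / ε) * (((b 0:ℕ):ℝ)+1) * P * ((K:ℝ)+1) ^ (ε * d + ε) := key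
        _ = 9 * (A / ε) * ((((b 0:ℕ):ℝ)+1) * P) * ((K:ℝ)+1) ^ (ε * d + ε) := by ring

lemma top_bound (h1 : 1 ≤ a) (h2 : a ≤ N) (d : ℕ) (c : Fin d → ℕ)
    (hc : ∀ i, 1 ≤ c i) (hc1 : ∀ h : 0 < d, 3 ≤ c ⟨0, h⟩) :
    ∃ A : ℝ, 0 ≤ A ∧ ∀ (b : Fin (d+1) → ℕ) (K : ℕ),
      Tfun N a (blockIndex d c b) K ≤ A * ∏ j, ((b j : ℝ)+1) := by
  cases d with
  | zero =>
      refine ⟨9, by norm_num, fun b K => ?_⟩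
      rw [blockIndex_zero]
      have htwo := twoBlock h1 h2 [] 1 (by norm_num) (b 0) K
        (fun k _ => le_of_eq (Tfun_nil N a k))
      refine le_trans htwo ?_
      rw [Fin.prod_univ_one]
      have hG := Gp_le_nine h1 h2 K
      have hb : (0:ℝ) ≤ (b 0 : ℝ) := by positivity
      nlinarith [Gp_ge_one h1 h2 K]
  | succ e =>
      set ε : ℝ := 1/((e:ℝ)+1) with hε
      have hε0 : 0 < ε := by positivity
      have hε1 : ε ≤ 1 := by
        rw [hε, div_le_one (by positivity)]
        linarith [show (0:ℝ) ≤ (e:ℝ) by positivity]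
      have hεe : ε * e ≤ 1 := by
        rw [hε]
        rw [div_mul_eq_mul_div, div_le_one (by positivity)]
        linarith [show (0:ℝ) ≤ (e:ℝ) by positivity]
      obtain ⟨A, hA0, hA⟩ := inner_bound h1 h2 ε hε0 hε1 e hεe
        (fun i => c i.succ) (fun i => hc i.succ)
      have hc0 : 3 ≤ c 0 := hc1 (Nat.succ_pos e)
      refine ⟨9 * (2 * A), by positivity, fun b K => ?_⟩
      rw [blockIndex_succ]
      set b' : Fin (e+1) → ℕ := fun i => b i.succ with hb'
      set P : ℝ := ∏ j, ((b' j : ℝ)+1) with hP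
      have hPnn : 0 ≤ P := Finset.prod_nonneg fun j _ => by positivity
      have hδ1 : ε * e ≤ 1 := hεe
      have hthree : ∀ k : ℕ,
          Tfun N a (c 0 :: blockIndex e (fun i => c i.succ) b') k ≤ 2 * (A * P) := by
        intro k
        exact threeStep h1 h2 (c 0) hc0 _ (A * P) (ε * e)
          (mul_nonneg hA0 hPnn) (by positivity) hδ1
          (fun k' => by
            have := hA b' k'
            rw [hP]
            exact this) k
      have htwo := twoBlock h1 h2 _ (2 * (A * P)) (by positivity) (b 0) K
        (fun k _ => hthree k)
      refine le_trans htwo ?_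
      have hprod : (∏ j : Fin (e+2), ((b j : ℝ)+1)) = ((b 0 : ℝ)+1) * P := by
        rw [hP, Fin.prod_univ_succ]
      rw [hprod]
      have hG := Gp_le_nine h1 h2 K
      have hG1 := Gp_ge_one h1 h2 K
      have hb0 : (0:ℝ) ≤ (b 0 : ℝ) := by positivity
      nlinarith [mul_nonneg (mul_nonneg hA0 hPnn) hb0, mul_nonneg hA0 hPnn]
end Main

section Sum
variable {N a : ℕ}

/-- The summand family of `tStar`. -/
noncomputable def tFam (N a : ℕ) (s : List ℕ) (k : Fin s.length → ℕ) : ℝ :=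
  if ∀ i j : Fin s.length, i ≤ j → k j ≤ k i then
    ∏ i : Fin s.length, (1 : ℝ) / ((N : ℝ) * k i + a) ^ s.get i
  else 0

lemma tFam_nonneg (N a : ℕ) (s : List ℕ) (k : Fin s.length → ℕ) : 0 ≤ tFam N a s k := by
  rw [tFam]
  split_ifs
  · exact Finset.prod_nonneg fun i _ => by positivity
  · exact le_rfl

lemma tStar_eq_tsum (s : List ℕ) : tStar N a s = ∑' k, tFam N a s k := rfl

lemma Tfun_eq_sum (s : List ℕ) (K : ℕ) :
    Tfun N a s K = ∑ k ∈ Fintype.piFinset (fun _ : Fin s.length => Finset.range (K+1)),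
      tFam N a s k := rfl

lemma subset_piFinset (s : List ℕ) (t : Finset (Fin s.length → ℕ)) :
    ∃ K : ℕ, t ⊆ Fintype.piFinset (fun _ : Fin s.length => Finset.range (K+1)) := by
  classical
  refine ⟨t.sup (fun k => Finset.univ.sup k), fun k hk => ?_⟩
  refine Fintype.mem_piFinset.2 fun i => Finset.mem_range.2 (Nat.lt_succ_of_le ?_)
  calc k i ≤ Finset.univ.sup k := Finset.le_sup (Finset.mem_univ i)
    _ ≤ t.sup (fun k => Finset.univ.sup k) := Finset.le_sup hk

lemma finsetsum_le_Tfun (s : List ℕ) (t : Finset (Fin s.length → ℕ)) :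
    ∃ K, ∑ k ∈ t, tFam N a s k ≤ Tfun N a s K := by
  obtain ⟨K, hK⟩ := subset_piFinset s t
  refine ⟨K, ?_⟩
  rw [Tfun_eq_sum]
  exact Finset.sum_le_sum_of_subset_of_nonneg hK fun k _ _ => tFam_nonneg N a s k

lemma summable_tFam {s : List ℕ} {B : ℝ} (hB : ∀ K, Tfun N a s K ≤ B) :
    Summable (tFam N a s) := by
  refine summable_of_sum_le (c := B) (tFam_nonneg N a s) fun t => ?_
  obtain ⟨K, hK⟩ := finsetsum_le_Tfun s t
  exact le_trans hK (hB K)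

lemma tStar_le {s : List ℕ} {B : ℝ} (hB : ∀ K, Tfun N a s K ≤ B) : tStar N a s ≤ B := by
  rw [tStar_eq_tsum]
  refine Summable.tsum_le_of_sum_le (summable_tFam hB) fun t => ?_
  obtain ⟨K, hK⟩ := finsetsum_le_Tfun s t
  exact le_trans hK (hB K)

lemma tStarFin_le_tStar {s : List ℕ} {B : ℝ} (hB : ∀ K, Tfun N a s K ≤ B) (n : ℕ) :
    tStarFin N a n s ≤ tStar N a s := by
  rw [tStarFin_eq_Tfun, Tfun_eq_sum, tStar_eq_tsum]
  exact Summable.sum_le_tsum _ (fun k _ => tFam_nonneg N a s k) (summable_tFam hB)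

lemma tStarFin_nonneg (n : ℕ) (s : List ℕ) : 0 ≤ tStarFin N a n s := by
  rw [tStarFin_eq_Tfun]
  exact Tfun_nonneg N a s n

lemma tStar_nonneg {s : List ℕ} {B : ℝ} (hB : ∀ K, Tfun N a s K ≤ B) : 0 ≤ tStar N a s := by
  rw [tStar_eq_tsum]
  exact tsum_nonneg fun k => tFam_nonneg N a s k

lemma tendsto_tStarFin {s : List ℕ} {B : ℝ} (hB : ∀ K, Tfun N a s K ≤ B) :
    Tendsto (fun n => tStarFin N a n s) atTop (nhds (tStar N a s)) := by
  classical
  have hsum := summable_tFam (N := N) (a := a) hB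
  have hmono : Monotone (fun n : ℕ =>
      Fintype.piFinset (fun _ : Fin s.length => Finset.range (n+1))) := by
    intro m n hmn k hk
    exact Fintype.mem_piFinset.2 fun i => Finset.mem_range.2
      (lt_of_lt_of_le (Finset.mem_range.1 (Fintype.mem_piFinset.1 hk i)) (by omega))
  have hexh : ∀ k : Fin s.length → ℕ, ∃ n : ℕ,
      k ∈ Fintype.piFinset (fun _ : Fin s.length => Finset.range (n+1)) := by
    intro k
    refine ⟨Finset.univ.sup k, Fintype.mem_piFinset.2 fun i => Finset.mem_range.2
      (Nat.lt_succ_of_le (Finset.le_sup (Finset.mem_univ i)))⟩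
  have htend := tendsto_atTop_finset_of_monotone hmono hexh
  have := (hsum.hasSum.comp htend)
  refine this.congr fun n => ?_
  rw [tStarFin_eq_Tfun, Tfun_eq_sum]
  rfl

end Sum

section Pi

lemma summable_pi_prod : ∀ (m : ℕ) (g : Fin m → ℕ → ℝ), (∀ j n, 0 ≤ g j n) →
    (∀ j, Summable (g j)) →
    Summable (fun b : Fin m → ℕ => ∏ j, g j (b j)) := by
  intro m
  induction m with
  | zero =>
      intro g _ _
      haveI : Finite (Fin 0 → ℕ) := Finite.of_subsingleton
      exact Summable.of_finite
  | succ m ih =>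
      intro g hg hs
      have h2 : Summable (fun p : ℕ × (Fin m → ℕ) => g 0 p.1 * ∏ j, g j.succ (p.2 j)) := by
        apply Summable.mul_of_nonneg (hs 0)
          (ih (fun j => g j.succ) (fun j n => hg j.succ n) (fun j => hs j.succ))
          (fun n => hg 0 n)
        intro p
        exact Finset.prod_nonneg fun j _ => hg j.succ (p j)
      let e : (Fin (m+1) → ℕ) ≃ ℕ × (Fin m → ℕ) :=
        { toFun := fun b => (b 0, fun j => b j.succ)
          invFun := fun p => Fin.cons p.1 p.2
          left_inv := fun b => by
            funext i
            rcases Fin.eq_zero_or_eq_succ i with rfl | ⟨i', rfl⟩ <;> simp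
          right_inv := fun p => by
            ext <;> simp }
      have h3 : Summable ((fun p : ℕ × (Fin m → ℕ) => g 0 p.1 * ∏ j, g j.succ (p.2 j)) ∘ e) :=
        (Equiv.summable_iff e).2 h2
      refine h3.congr fun b => ?_
      have hcomp : ((fun p : ℕ × (Fin m → ℕ) => g 0 p.1 * ∏ j, g j.succ (p.2 j)) ∘ e) b
          = g 0 (b 0) * ∏ j : Fin m, g j.succ (b j.succ) := rfl
      rw [hcomp, ← Fin.prod_univ_succ (f := fun j => g j (b j))]

lemma summable_geom_aux {u : ℝ} (h0 : 0 ≤ u) (hlt : u < 1) :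
    Summable (fun n : ℕ => ((n:ℝ)+1) * u ^ (2*n)) := by
  have hu2 : ‖u^2‖ < 1 := by
    rw [Real.norm_eq_abs, abs_of_nonneg (by positivity)]
    nlinarith
  have h1 := summable_pow_mul_geometric_of_norm_lt_one (R := ℝ) 1 hu2
  have h2 := summable_geometric_of_lt_one (by positivity : (0:ℝ) ≤ u^2) (by nlinarith)
  refine (h1.add h2).congr fun n => ?_
  rw [pow_mul]
  push_cast
  ring

end Pi

/-- Lemma 3.1: `D_n(c;z) → D(c;z)` as `n → ∞`, for every `z` with all `|z_j| < 1`, and the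
convergence is uniform on every closed polydisc `{|z_j| ≤ u_j}` with all `u_j < 1`. -/
theorem Dgen_tendsto_DgenInf
    (N a : ℕ) (h1 : 1 ≤ a) (h2 : a ≤ N) (d : ℕ)
    (c : Fin d → ℕ) (hc : ∀ i, 1 ≤ c i ∧ c i ≠ 2)
    (hc1 : ∀ h : 0 < d, 3 ≤ c ⟨0, h⟩) :
    (∀ z : Fin (d + 1) → ℂ, (∀ j, ‖z j‖ < 1) →
      Tendsto (fun n : ℕ => Dgen N a d c n z) atTop (nhds (DgenInf N a d c z))) ∧
    ∀ u : Fin (d + 1) → ℝ, (∀ j, 0 ≤ u j ∧ u j < 1) →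
      TendstoUniformlyOn (fun n : ℕ => Dgen N a d c n) (DgenInf N a d c)
        atTop {z : Fin (d + 1) → ℂ | ∀ j, ‖z j‖ ≤ u j} := by
  obtain ⟨A, hA0, hA⟩ := top_bound h1 h2 d c (fun i => (hc i).1) hc1
  have key : ∀ u : Fin (d + 1) → ℝ, (∀ j, 0 ≤ u j ∧ u j < 1) →
      TendstoUniformlyOn (fun n : ℕ => Dgen N a d c n) (DgenInf N a d c)
        atTop {z : Fin (d + 1) → ℂ | ∀ j, ‖z j‖ ≤ u j} := by
    intro u hu
    set w : (Fin (d+1) → ℕ) → ℝ := fun b => ∏ j, (u j) ^ (2 * b j) with hw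
    have hw_nonneg : ∀ b, 0 ≤ w b := fun b =>
      Finset.prod_nonneg fun j _ => pow_nonneg (hu j).1 _
    set Maj : (Fin (d+1) → ℕ) → ℝ := fun b => (A * ∏ j, ((b j:ℝ)+1)) * w b with hMaj
    have hprod_nonneg : ∀ b : Fin (d+1) → ℕ, (0:ℝ) ≤ ∏ j, ((b j:ℝ)+1) := fun b =>
      Finset.prod_nonneg fun j _ => by positivity
    have hMaj_nonneg : ∀ b, 0 ≤ Maj b := fun b =>
      mul_nonneg (mul_nonneg hA0 (hprod_nonneg b)) (hw_nonneg b)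
    have hMaj_sum : Summable Maj := by
      have hs := summable_pi_prod (d+1) (fun j n => (((n:ℝ))+1) * (u j) ^ (2*n))
        (fun j n => mul_nonneg (by positivity) (pow_nonneg (hu j).1 _))
        (fun j => summable_geom_aux (hu j).1 (hu j).2)
      refine (hs.mul_left A).congr fun b => ?_
      rw [hMaj, hw]
      rw [Finset.prod_mul_distrib]
      ring
    have htS : ∀ b, tStar N a (blockIndex d c b) ≤ A * ∏ j, ((b j:ℝ)+1) := fun b =>
      tStar_le (hA b)
    have htSnn : ∀ b, 0 ≤ tStar N a (blockIndex d c b) := fun b => tStar_nonneg (hA b)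
    have htF : ∀ (n : ℕ) b, tStarFin N a n (blockIndex d c b) ≤ tStar N a (blockIndex d c b) :=
      fun n b => tStarFin_le_tStar (hA b) n
    have htFnn : ∀ (n : ℕ) b, 0 ≤ tStarFin N a n (blockIndex d c b) := fun n b =>
      tStarFin_nonneg n _
    have htend : ∀ b, Tendsto (fun n => tStarFin N a n (blockIndex d c b)) atTop
        (nhds (tStar N a (blockIndex d c b))) := fun b => tendsto_tStarFin (hA b)
    set F : ℕ → (Fin (d+1) → ℕ) → ℝ := fun n b =>
      (tStar N a (blockIndex d c b) - tStarFin N a n (blockIndex d c b)) * w b with hF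
    have hFnn : ∀ n b, 0 ≤ F n b := fun n b =>
      mul_nonneg (sub_nonneg.2 (htF n b)) (hw_nonneg b)
    have hFleMaj : ∀ n b, F n b ≤ Maj b := by
      intro n b
      rw [hF, hMaj]
      refine mul_le_mul_of_nonneg_right ?_ (hw_nonneg b)
      refine le_trans ?_ (htS b)
      have := htFnn n b
      linarith
    have hFle : ∀ n b, ‖F n b‖ ≤ Maj b := by
      intro n b
      rw [Real.norm_eq_abs, abs_of_nonneg (hFnn n b)]
      exact hFleMaj n b
    have hFtend : ∀ b, Tendsto (fun n => F n b) atTop (nhds 0) := by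
      intro b
      have h0 : Tendsto (fun n => tStar N a (blockIndex d c b)
          - tStarFin N a n (blockIndex d c b)) atTop
          (nhds (tStar N a (blockIndex d c b) - tStar N a (blockIndex d c b))) :=
        tendsto_const_nhds.sub (htend b)
      have := h0.mul_const (w b)
      simpa using this
    have hEtend : Tendsto (fun n => ∑' b, F n b) atTop (nhds 0) := by
      have := tendsto_tsum_of_dominated_convergence (f := F)
        (g := fun _ : Fin (d+1) → ℕ => (0:ℝ)) (bound := Maj) hMaj_sum hFtend
        (Filter.Eventually.of_forall (fun n => fun b => hFle n b))
      simpa using this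
    rw [Metric.tendstoUniformlyOn_iff]
    intro ε' hε'
    filter_upwards [hEtend.eventually_lt_const hε'] with n hn
    intro z hz
    replace hz : ∀ j, ‖z j‖ ≤ u j := hz
    -- complex summands
    set gz : (Fin (d+1) → ℕ) → ℂ := fun b =>
      ((tStar N a (blockIndex d c b) : ℝ) : ℂ) * ∏ j : Fin (d + 1), z j ^ (2 * b j) with hgz
    set gn : (Fin (d+1) → ℕ) → ℂ := fun b =>
      ((tStarFin N a n (blockIndex d c b) : ℝ) : ℂ) * ∏ j : Fin (d + 1), z j ^ (2 * b j)
      with hgn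
    have hzw : ∀ b, ‖∏ j : Fin (d + 1), z j ^ (2 * b j)‖ ≤ w b := by
      intro b
      rw [norm_prod, hw]
      refine Finset.prod_le_prod (fun j _ => norm_nonneg _) fun j _ => ?_
      rw [norm_pow]
      exact pow_le_pow_left₀ (norm_nonneg _) (hz j) _
    have hgz_norm : ∀ b, ‖gz b‖ ≤ Maj b := by
      intro b
      rw [hgz]
      rw [norm_mul, Complex.norm_real, Real.norm_eq_abs, abs_of_nonneg (htSnn b)]
      calc tStar N a (blockIndex d c b) * ‖∏ j : Fin (d + 1), z j ^ (2 * b j)‖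
          ≤ (A * ∏ j, ((b j:ℝ)+1)) * w b :=
            mul_le_mul (htS b) (hzw b) (norm_nonneg _)
              (mul_nonneg hA0 (hprod_nonneg b))
        _ = Maj b := rfl
    have hgn_norm : ∀ b, ‖gn b‖ ≤ Maj b := by
      intro b
      rw [hgn]
      rw [norm_mul, Complex.norm_real, Real.norm_eq_abs, abs_of_nonneg (htFnn n b)]
      calc tStarFin N a n (blockIndex d c b) * ‖∏ j : Fin (d + 1), z j ^ (2 * b j)‖
          ≤ (A * ∏ j, ((b j:ℝ)+1)) * w b :=
            mul_le_mul (le_trans (htF n b) (htS b)) (hzw b) (norm_nonneg _)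
              (mul_nonneg hA0 (hprod_nonneg b))
        _ = Maj b := rfl
    have hgz_sum : Summable gz := Summable.of_norm
      (Summable.of_nonneg_of_le (fun b => norm_nonneg _) hgz_norm hMaj_sum)
    have hgn_sum : Summable gn := Summable.of_norm
      (Summable.of_nonneg_of_le (fun b => norm_nonneg _) hgn_norm hMaj_sum)
    have hdiff_norm : ∀ b, ‖gz b - gn b‖ ≤ F n b := by
      intro b
      have heq : gz b - gn b
          = (((tStar N a (blockIndex d c b) - tStarFin N a n (blockIndex d c b) : ℝ)) : ℂ)
              * ∏ j : Fin (d + 1), z j ^ (2 * b j) := by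
        rw [hgz, hgn]
        push_cast
        ring
      rw [heq, norm_mul, Complex.norm_real, Real.norm_eq_abs,
        abs_of_nonneg (sub_nonneg.2 (htF n b)), hF]
      exact mul_le_mul_of_nonneg_left (hzw b) (sub_nonneg.2 (htF n b))
    have hFsum : Summable (F n) := Summable.of_nonneg_of_le (hFnn n) (hFleMaj n) hMaj_sum
    have hdiff_sum : Summable (fun b => ‖gz b - gn b‖) :=
      Summable.of_nonneg_of_le (fun b => norm_nonneg _)
        (fun b => le_trans (hdiff_norm b) (hFleMaj n b)) hMaj_sum
    have hdist : dist (DgenInf N a d c z) (Dgen N a d c n z) ≤ ∑' b, F n b := by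
      rw [dist_eq_norm]
      have hDz : DgenInf N a d c z = ∑' b, gz b := rfl
      have hDn : Dgen N a d c n z = ∑' b, gn b := rfl
      rw [hDz, hDn]
      have hsub : ∑' b, (gz b - gn b) = (∑' b, gz b) - (∑' b, gn b) :=
        (hgz_sum.hasSum.sub hgn_sum.hasSum).tsum_eq
      rw [← hsub]
      calc ‖∑' b, (gz b - gn b)‖ ≤ ∑' b, ‖gz b - gn b‖ := norm_tsum_le_tsum_norm hdiff_sum
        _ ≤ ∑' b, F n b := Summable.tsum_le_tsum hdiff_norm hdiff_sum hFsum
    exact lt_of_le_of_lt hdist hn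
  refine ⟨?_, key⟩
  intro z hz
  have hmem : z ∈ {w : Fin (d + 1) → ℂ | ∀ j, ‖w j‖ ≤ ‖z j‖} := fun j => le_rfl
  exact (key (fun j => ‖z j‖) (fun j => ⟨norm_nonneg _, hz j⟩)).tendsto_at hmem
end
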